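/- arXiv:0809.2840 — 12 statements merged into one kernel-verified Lean document; each statement's English description precedes it below -/
import Mathlib

section
/- For every α > 2, there exists a unique Λ* > 0 satisfying α/2 = (1 + Λ*^{α/2}) · log(1 + Λ*^{-α/2}). -/
/-!
Substituting `t = Λ ^ (α / 2)`, which is a bijection of `(0, ∞)`, the equation becomes
`(1 + t) * log (1 + t⁻¹) = α / 2`. The left side is strictly decreasing in `t`, since its derivative
`log (1 + t⁻¹) - t⁻¹` is negative by `log x < x - 1`; it exceeds every `c > 1` near `0` and falls
below it for large `t`, so by the intermediate value theorem it takes the value `α / 2 > 1` exactly once.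
-/

open Real Set

noncomputable def lambdaProfile (t : ℝ) : ℝ := (1 + t) * log (1 + t⁻¹)

lemma hasDerivAt_lambdaProfile {t : ℝ} (ht : 0 < t) :
    HasDerivAt lambdaProfile (log (1 + t⁻¹) - t⁻¹) t := by
  have hlog : HasDerivAt (fun x : ℝ => log (1 + x⁻¹)) (-(t ^ 2)⁻¹ / (1 + t⁻¹)) t :=
    ((hasDerivAt_inv ht.ne').const_add 1).log (by positivity)
  refine (((hasDerivAt_id t).const_add 1).mul hlog).congr_deriv ?_
  simp only [id]
  field_simp
  ring

lemma continuousOn_lambdaProfile : ContinuousOn lambdaProfile (Ioi 0) :=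
  fun _ ht => (hasDerivAt_lambdaProfile ht).continuousAt.continuousWithinAt

lemma log_one_add_inv_lt_inv {t : ℝ} (ht : 0 < t) : log (1 + t⁻¹) < t⁻¹ := by
  have := log_lt_sub_one_of_pos (x := 1 + t⁻¹) (by positivity) (by simp [ht.ne'])
  linarith

lemma strictAntiOn_lambdaProfile : StrictAntiOn lambdaProfile (Ioi 0) := by
  refine strictAntiOn_of_deriv_neg (convex_Ioi 0) continuousOn_lambdaProfile fun t ht => ?_
  rw [interior_Ioi] at ht
  rw [(hasDerivAt_lambdaProfile ht).deriv]
  linarith [log_one_add_inv_lt_inv ht]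

lemma lambdaProfile_lt_one_add_inv {t : ℝ} (ht : 0 < t) : lambdaProfile t < 1 + t⁻¹ :=
  calc lambdaProfile t < (1 + t) * t⁻¹ := by
        unfold lambdaProfile
        gcongr
        exact log_one_add_inv_lt_inv ht
    _ = 1 + t⁻¹ := by field_simp; ring

lemma lambdaProfile_inv_exp_sub_one (c : ℝ) :
    lambdaProfile (exp c - 1)⁻¹ = (1 + (exp c - 1)⁻¹) * c := by
  rw [lambdaProfile, inv_inv, add_sub_cancel, log_exp]

lemma existsUnique_pos_lambdaProfile_eq {c : ℝ} (hc : 1 < c) :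
    ∃! t : ℝ, 0 < t ∧ lambdaProfile t = c := by
  set a := (exp c - 1)⁻¹
  set b := (c - 1)⁻¹
  have ha : 0 < a := inv_pos.mpr (by linarith [add_one_lt_exp (by positivity : c ≠ 0)])
  have hb : 0 < b := inv_pos.mpr (by linarith)
  have hfa : c ≤ lambdaProfile a := by
    rw [lambdaProfile_inv_exp_sub_one]
    nlinarith
  have hfb : lambdaProfile b ≤ c := by
    have := lambdaProfile_lt_one_add_inv hb
    rw [inv_inv] at this
    linarith
  obtain ⟨t, ht, hft⟩ := isPreconnected_Ioi.intermediate_value hb ha continuousOn_lambdaProfile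
    ⟨hfb, hfa⟩
  exact ⟨t, ⟨ht, hft⟩, fun s ⟨hs, hfs⟩ =>
    strictAntiOn_lambdaProfile.injOn hs ht (hfs.trans hft.symm)⟩

lemma existsUnique_pos_of_rpow {P : ℝ → Prop} {p : ℝ} (hp : p ≠ 0)
    (h : ∃! t : ℝ, 0 < t ∧ P t) : ∃! x : ℝ, 0 < x ∧ P (x ^ p) := by
  obtain ⟨t, ⟨ht, hPt⟩, huniq⟩ := h
  refine ⟨t ^ p⁻¹, ⟨by positivity, by rwa [rpow_inv_rpow ht.le hp]⟩, fun x ⟨hx, hPx⟩ => ?_⟩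
  rw [← huniq _ ⟨by positivity, hPx⟩, rpow_rpow_inv hx.le hp]

theorem unique_Lambda_star (α : ℝ) (hα : 2 < α) :
    ∃! Λ : ℝ, 0 < Λ ∧ α / 2 = (1 + Λ ^ (α / 2)) * Real.log (1 + Λ ^ (-(α / 2))) := by
  have key := existsUnique_pos_of_rpow (p := α / 2) (by positivity)
    (existsUnique_pos_lambdaProfile_eq (by linarith : 1 < α / 2))
  refine (existsUnique_congr fun Λ => ?_).mp key
  refine and_congr_right fun hΛ => ?_
  rw [rpow_neg hΛ.le, lambdaProfile, eq_comm]
end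

section
/- For α > 2 and N > 0, the function β ↦ log(1+β)·e^{−1}/(N·β^{2/α}) on (0,∞) has a unique critical point β* satisfying α/2 = (1 + 1/β*)·log(1 + β*), and this is its unique global maximum. -/
/-!
With `p = 2 / α`, the objective is a positive multiple of `exp (log (log (1 + x)) - p log x)`,
and the derivative of the exponent has the sign of `1 - p (1 + 1/x) log (1 + x)`. The level
function `(1 + 1/x) log (1 + x)` has derivative `(x - log (1 + x)) / x² > 0` and runs from `1`
to `∞`, so it takes the value `α / 2 > 1` exactly once, at `β*`; the objective strictly
increases up to `β*` and strictly decreases after it.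
-/

open Real Set

noncomputable def criticalLevel (x : ℝ) : ℝ := (1 + 1 / x) * log (1 + x)

noncomputable def logObjective (p x : ℝ) : ℝ := log (log (1 + x)) - p * log x

lemma log_one_add_lt_self {x : ℝ} (hx : 0 < x) : log (1 + x) < x := by
  linarith [log_lt_sub_one_of_pos (by linarith : 0 < 1 + x) (by linarith : 1 + x ≠ 1)]

lemma hasDerivAt_log_one_add {x : ℝ} (hx : -1 < x) :
    HasDerivAt (fun t => log (1 + t)) (1 + x)⁻¹ x := by
  simpa using ((hasDerivAt_id x).const_add 1).log (by simp only [id]; linarith)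

lemma hasDerivAt_criticalLevel {x : ℝ} (hx : 0 < x) :
    HasDerivAt criticalLevel ((x - log (1 + x)) / x ^ 2) x := by
  have h := ((hasDerivAt_inv hx.ne').const_add 1).mul (hasDerivAt_log_one_add (by linarith))
  unfold criticalLevel
  simp only [one_div]
  refine h.congr_deriv ?_
  have : 1 + x ≠ 0 := by linarith
  field_simp
  ring

lemma continuousOn_criticalLevel : ContinuousOn criticalLevel (Ioi 0) := fun _ hx =>
  (hasDerivAt_criticalLevel hx).continuousAt.continuousWithinAt

lemma strictMonoOn_criticalLevel : StrictMonoOn criticalLevel (Ioi 0) := by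
  refine strictMonoOn_of_deriv_pos (convex_Ioi 0) continuousOn_criticalLevel fun x hx => ?_
  rw [interior_Ioi] at hx
  rw [(hasDerivAt_criticalLevel hx).deriv]
  exact div_pos (sub_pos.2 (log_one_add_lt_self hx)) (pow_pos hx 2)

lemma exists_criticalLevel_eq {c : ℝ} (hc : 1 < c) : ∃ β, 0 < β ∧ criticalLevel β = c := by
  set a := (c - 1) / 2
  set b := exp c - 1
  have ha : 0 < a := by simp only [a]; linarith
  have hab : a < b := by simp only [a, b]; linarith [add_one_lt_exp (by positivity : c ≠ 0)]
  have hb : 0 < b := ha.trans hab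
  -- `a + 1 < c` bounds the level at `a` from above; `log (1 + b) = c` bounds it at `b` from below.
  have hlow : criticalLevel a ≤ c := by
    have h := mul_lt_mul_of_pos_left (log_one_add_lt_self ha) (by positivity : 0 < 1 + 1 / a)
    have : (1 + 1 / a) * a = a + 1 := by field_simp
    simp only [criticalLevel, a] at h this ⊢
    linarith
  have hhigh : c ≤ criticalLevel b := by
    have hlog : log (1 + b) = c := by simp [b]
    rw [criticalLevel, hlog]
    nlinarith [one_div_pos.2 hb]
  obtain ⟨β, hβ, hβc⟩ := intermediate_value_Icc hab.le
    (continuousOn_criticalLevel.mono fun x hx => ha.trans_le hx.1) ⟨hlow, hhigh⟩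
  exact ⟨β, ha.trans_le hβ.1, hβc⟩

lemma hasDerivAt_logObjective (p : ℝ) {x : ℝ} (hx : 0 < x) :
    HasDerivAt (logObjective p)
      ((1 - p * criticalLevel x) / ((1 + x) * log (1 + x))) x := by
  have hlog : 0 < log (1 + x) := log_pos (by linarith)
  have h := ((hasDerivAt_log_one_add (by linarith)).log hlog.ne').sub
    ((hasDerivAt_log hx.ne').const_mul p)
  refine h.congr_deriv ?_
  have : 1 + x ≠ 0 := by linarith
  simp only [criticalLevel]
  field_simp
  ring

lemma continuousOn_logObjective (p : ℝ) : ContinuousOn (logObjective p) (Ioi 0) := fun _ hx =>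
  (hasDerivAt_logObjective p hx).continuousAt.continuousWithinAt

section

variable {p β : ℝ}

lemma strictMonoOn_logObjective (hp : 0 < p) (hβ : 0 < β) (hcrit : p * criticalLevel β = 1) :
    StrictMonoOn (logObjective p) (Ioc 0 β) := by
  refine strictMonoOn_of_deriv_pos (convex_Ioc 0 β)
    ((continuousOn_logObjective p).mono fun x hx => hx.1) fun x hx => ?_
  rw [interior_Ioc] at hx
  have hlog : 0 < log (1 + x) := log_pos (by linarith [hx.1])
  have hlevel : p * criticalLevel x < 1 :=
    hcrit ▸ mul_lt_mul_of_pos_left (strictMonoOn_criticalLevel hx.1 hβ hx.2) hp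
  rw [(hasDerivAt_logObjective p hx.1).deriv]
  exact div_pos (sub_pos.2 hlevel) (mul_pos (by linarith [hx.1]) hlog)

lemma strictAntiOn_logObjective (hp : 0 < p) (hβ : 0 < β) (hcrit : p * criticalLevel β = 1) :
    StrictAntiOn (logObjective p) (Ici β) := by
  refine strictAntiOn_of_deriv_neg (convex_Ici β)
    ((continuousOn_logObjective p).mono fun x hx => hβ.trans_le hx) fun x hx => ?_
  rw [interior_Ici] at hx
  have hx0 : 0 < x := hβ.trans hx
  have hlog : 0 < log (1 + x) := log_pos (by linarith)
  have hlevel : 1 < p * criticalLevel x :=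
    hcrit ▸ mul_lt_mul_of_pos_left (strictMonoOn_criticalLevel hβ hx0 hx) hp
  rw [(hasDerivAt_logObjective p hx0).deriv]
  exact div_neg_of_neg_of_pos (sub_neg.2 hlevel) (mul_pos (by linarith) hlog)

lemma logObjective_lt_of_ne (hp : 0 < p) (hβ : 0 < β) (hcrit : p * criticalLevel β = 1)
    {x : ℝ} (hx : 0 < x) (hne : x ≠ β) :
    logObjective p x < logObjective p β := by
  rcases hne.lt_or_gt with hlt | hgt
  · exact strictMonoOn_logObjective hp hβ hcrit ⟨hx, hlt.le⟩ ⟨hβ, le_rfl⟩ hlt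
  · exact strictAntiOn_logObjective hp hβ hcrit (le_refl β) hgt.le hgt

end

lemma exp_logObjective (p : ℝ) {x : ℝ} (hx : 0 < x) :
    exp (logObjective p x) = log (1 + x) / x ^ p := by
  rw [logObjective, exp_sub, exp_log (log_pos (by linarith)), rpow_def_of_pos hx, mul_comm]

theorem unique_optimal_beta (α N : ℝ) (hα : 2 < α) (hN : 0 < N) :
    (∃! β : ℝ, 0 < β ∧ α / 2 = (1 + 1 / β) * Real.log (1 + β)) ∧
    ∀ β : ℝ, 0 < β → α / 2 = (1 + 1 / β) * Real.log (1 + β) →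
      ∀ x ∈ Set.Ioi (0 : ℝ), x ≠ β →
        Real.log (1 + x) * Real.exp (-1) / (N * x ^ (2 / α)) <
        Real.log (1 + β) * Real.exp (-1) / (N * β ^ (2 / α)) := by
  have hα0 : 0 < α := by linarith
  refine ⟨?_, fun β hβ hcrit x hx hne => ?_⟩
  · obtain ⟨β, hβ, hβc⟩ := exists_criticalLevel_eq (by linarith : 1 < α / 2)
    exact ⟨β, ⟨hβ, hβc.symm⟩, fun y ⟨hy, hyc⟩ =>
      strictMonoOn_criticalLevel.injOn hy hβ (hyc.symm.trans hβc.symm)⟩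
  · have hpcrit : 2 / α * criticalLevel β = 1 := by
      rw [criticalLevel, ← hcrit]
      field_simp
    have hlt := logObjective_lt_of_ne (by positivity) hβ hpcrit hx hne
    rw [← exp_lt_exp, exp_logObjective _ hx, exp_logObjective _ hβ] at hlt
    calc _ = log (1 + x) / x ^ (2 / α) * (exp (-1) / N) := by ring
      _ < log (1 + β) / β ^ (2 / α) * (exp (-1) / N) :=
        mul_lt_mul_of_pos_right hlt (by positivity)
      _ = _ := by ring
end

section
/- Suppose 2 < α < 4. If 0 < Λ₁ ≤ Λ₂, then ∂U₁/∂Λ₁ > 0, where U₁(Λ₁,Λ₂) = Λ₁·log(1 + Λ₁^{−α/2})·exp(−Λ₂/Λ₁ − 1). Consequently, at any Nash equilibrium of the Transformed Random Access Game with strategy spaces [0,N₁]×[0,N₂], at least one network has Λᵢ = Nᵢ. -/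
/-!
Write `U(x) = x · log (1 + x ^ p) · exp (-(c / x) - 1)` with `p = -α/2` and `t = x ^ p`. Its derivative
is `exp (-(c / x) - 1)` times `log (1 + t) · (1 + c / x) + p · t / (1 + t)`. For `x ≤ c` and `p > -2`
this is positive because `t / (1 + t) < log (1 + t)`. So a network whose opponent uses at least its
own intensity strictly gains by increasing it; at a Nash equilibrium the network with the smaller
intensity therefore sits at its cap (`U(0) = 0 < U(N)` excludes the other endpoint).
-/

open Real Set

lemma Real.div_one_add_lt_log_one_add {t : ℝ} (ht : 0 < t) : t / (1 + t) < log (1 + t) := by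
  have h : t / (1 + t) ≤ 2 * t / (t + 2) := by
    rw [div_le_div_iff₀ (by linarith) (by linarith)]
    nlinarith
  exact h.trans_lt (lt_log_one_add_of_pos ht)

noncomputable def accessPayoff (p c x : ℝ) : ℝ :=
  x * log (1 + x ^ p) * exp (-(c / x) - 1)

namespace accessPayoff

variable {p c x : ℝ}

@[simp]
lemma apply_zero : accessPayoff p c 0 = 0 := by
  simp [accessPayoff]

lemma pos (hx : 0 < x) : 0 < accessPayoff p c x := by
  have ht : 0 < x ^ p := rpow_pos_of_pos hx p
  have hL : 0 < log (1 + x ^ p) := log_pos (by linarith)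
  unfold accessPayoff
  positivity

lemma hasDerivAt (hx : 0 < x) :
    HasDerivAt (accessPayoff p c)
      ((log (1 + x ^ p) * (1 + c / x) + p * (x ^ p / (1 + x ^ p))) * exp (-(c / x) - 1)) x := by
  have ht : 0 < 1 + x ^ p := by linarith [rpow_pos_of_pos hx p]
  have hlog : HasDerivAt (fun y : ℝ => log (1 + y ^ p)) (p * x ^ (p - 1) / (1 + x ^ p)) x :=
    ((hasDerivAt_rpow_const (Or.inl hx.ne')).const_add 1).log ht.ne'
  have hexp : HasDerivAt (fun y : ℝ => exp (-(c / y) - 1))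
      (exp (-(c / x) - 1) * -(c * -(x ^ 2)⁻¹)) x := by
    simpa [div_eq_mul_inv] using
      (((hasDerivAt_inv hx.ne').const_mul c).neg.sub_const 1).exp
  refine (((hasDerivAt_id x).mul hlog).mul hexp).congr_deriv ?_
  rw [rpow_sub_one hx.ne']
  simp only [Pi.mul_apply, id]
  field_simp
  ring

lemma deriv_pos (hp : -2 < p) (hx : 0 < x) (hxc : x ≤ c) : 0 < deriv (accessPayoff p c) x := by
  rw [(hasDerivAt hx).deriv]
  set t := x ^ p
  have ht : 0 < t := rpow_pos_of_pos hx p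
  have hs : 0 < t / (1 + t) := by positivity
  have hlog : t / (1 + t) < log (1 + t) := div_one_add_lt_log_one_add ht
  have hcx : 1 ≤ c / x := (one_le_div hx).mpr hxc
  have hbracket : 0 < log (1 + t) * (1 + c / x) + p * (t / (1 + t)) := by
    nlinarith
  positivity

lemma eq_right_of_isMaxOn (hp : -2 < p) {N : ℝ} (hx : x ∈ Icc 0 N) (hxc : x ≤ c)
    (hmax : IsMaxOn (accessPayoff p c) (Icc 0 N) x) : x = N := by
  by_contra hxN
  have hxN : x < N := lt_of_le_of_ne hx.2 hxN
  rcases hx.1.eq_or_lt with rfl | hx0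
  · have hN := hmax (right_mem_Icc.mpr hxN.le)
    simp only [mem_ofPred_eq, apply_zero] at hN
    exact (pos hxN).not_ge hN
  · have hzero := (hmax.isLocalMax (Icc_mem_nhds hx0 hxN)).deriv_eq_zero
    exact (deriv_pos hp hx0 hxc).ne' hzero

end accessPayoff

theorem deriv_pos_and_NE_on_boundary_general (α N₁ N₂ : ℝ) (hα4 : α < 4) :
    (∀ Λ₁ Λ₂ : ℝ, 0 < Λ₁ → Λ₁ ≤ Λ₂ →
      0 < deriv (fun x : ℝ => x * Real.log (1 + x ^ (-(α / 2))) * Real.exp (-(Λ₂ / x) - 1)) Λ₁) ∧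
    (∀ Λ₁ Λ₂ : ℝ, Λ₁ ∈ Set.Icc 0 N₁ → Λ₂ ∈ Set.Icc 0 N₂ →
      IsMaxOn (fun x : ℝ => x * Real.log (1 + x ^ (-(α / 2))) * Real.exp (-(Λ₂ / x) - 1))
        (Set.Icc 0 N₁) Λ₁ →
      IsMaxOn (fun y : ℝ => y * Real.log (1 + y ^ (-(α / 2))) * Real.exp (-(Λ₁ / y) - 1))
        (Set.Icc 0 N₂) Λ₂ →
      Λ₁ = N₁ ∨ Λ₂ = N₂) := by
  have hp : -2 < -(α / 2) := by linarith
  refine ⟨fun Λ₁ Λ₂ h₁ h₁₂ => accessPayoff.deriv_pos hp h₁ h₁₂, ?_⟩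
  intro Λ₁ Λ₂ hΛ₁ hΛ₂ hmax₁ hmax₂
  rcases le_total Λ₁ Λ₂ with h₁₂ | h₂₁
  · exact Or.inl (accessPayoff.eq_right_of_isMaxOn hp hΛ₁ h₁₂ hmax₁)
  · exact Or.inr (accessPayoff.eq_right_of_isMaxOn hp hΛ₂ h₂₁ hmax₂)

theorem deriv_pos_and_NE_on_boundary (α N₁ N₂ : ℝ) (hα : 2 < α) (hα4 : α < 4)
    (hN₁ : 0 < N₁) (hN : N₁ ≤ N₂) :
    (∀ Λ₁ Λ₂ : ℝ, 0 < Λ₁ → Λ₁ ≤ Λ₂ →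
      0 < deriv (fun x : ℝ => x * Real.log (1 + x ^ (-(α / 2))) * Real.exp (-(Λ₂ / x) - 1)) Λ₁) ∧
    (∀ Λ₁ Λ₂ : ℝ, Λ₁ ∈ Set.Icc 0 N₁ → Λ₂ ∈ Set.Icc 0 N₂ →
      IsMaxOn (fun x : ℝ => x * Real.log (1 + x ^ (-(α / 2))) * Real.exp (-(Λ₂ / x) - 1))
        (Set.Icc 0 N₁) Λ₁ →
      IsMaxOn (fun y : ℝ => y * Real.log (1 + y ^ (-(α / 2))) * Real.exp (-(Λ₁ / y) - 1))
        (Set.Icc 0 N₂) Λ₂ →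
      Λ₁ = N₁ ∨ Λ₂ = N₂) :=
  deriv_pos_and_NE_on_boundary_general α N₁ N₂ hα4
end

section
/- For 2 < α < 4 and any N₁ > 0, the equation N₁ = Λ·(α/(2(1 + Λ^{α/2})·log(1 + Λ^{−α/2})) − 1) has a unique solution Λ > 0. -/
/-!
Substituting `t = Λ ^ (α / 2)`, the equation reads `(1 + N₁ / Λ) · 2 (1 + t) log (1 + 1 / t) = α`.
The left side is strictly decreasing in `Λ`, since `(1 + t) log (1 + 1 / t)` is strictly decreasing
in `t` (its derivative is `log (1 + 1 / t) - 1 / t < 0`). The bounds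
`1 ≤ (1 + t) log (1 + 1 / t) ≤ 1 + 1 / t` show that it is at least `α` at `Λ = 2 N₁ / (α - 2)` and
tends to `2 < α` as `Λ → ∞`, so the intermediate value theorem gives the solution.
-/

open Real Filter Topology

noncomputable def oneAddMulLogOneAddInv (t : ℝ) : ℝ := (1 + t) * log (1 + t⁻¹)

lemma hasDerivAt_oneAddMulLogOneAddInv {t : ℝ} (ht : 0 < t) :
    HasDerivAt oneAddMulLogOneAddInv (log (1 + t⁻¹) - t⁻¹) t := by
  have hlog : HasDerivAt (fun t : ℝ => log (1 + t⁻¹)) (-(t ^ 2)⁻¹ / (1 + t⁻¹)) t :=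
    ((hasDerivAt_inv ht.ne').const_add 1).log (by positivity)
  refine (((hasDerivAt_id t).const_add 1).mul hlog).congr_deriv ?_
  have hinv : 1 + t⁻¹ = (t + 1) / t := by field_simp
  rw [id, hinv]
  field_simp
  ring

lemma strictAntiOn_oneAddMulLogOneAddInv :
    StrictAntiOn oneAddMulLogOneAddInv (Set.Ioi 0) := by
  refine strictAntiOn_of_deriv_neg (convex_Ioi 0)
    (fun t ht => (hasDerivAt_oneAddMulLogOneAddInv ht).continuousAt.continuousWithinAt) ?_
  intro t ht
  rw [interior_Ioi] at ht
  have ht : 0 < t := ht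
  rw [(hasDerivAt_oneAddMulLogOneAddInv ht).deriv, sub_neg]
  have := log_lt_sub_one_of_pos (by positivity : 0 < 1 + t⁻¹) (by simp [ht.ne'])
  linarith

lemma one_le_oneAddMulLogOneAddInv {t : ℝ} (ht : 0 < t) : 1 ≤ oneAddMulLogOneAddInv t := by
  have hlog := one_sub_inv_le_log_of_pos (by positivity : 0 < 1 + t⁻¹)
  have hsub : 1 - (1 + t⁻¹)⁻¹ = (1 + t)⁻¹ := by field_simp; ring
  rw [hsub] at hlog
  calc 1 = (1 + t) * (1 + t)⁻¹ := by field_simp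
    _ ≤ oneAddMulLogOneAddInv t := by unfold oneAddMulLogOneAddInv; gcongr

lemma oneAddMulLogOneAddInv_le {t : ℝ} (ht : 0 < t) : oneAddMulLogOneAddInv t ≤ 1 + t⁻¹ := by
  have hlog := log_le_sub_one_of_pos (by positivity : 0 < 1 + t⁻¹)
  calc oneAddMulLogOneAddInv t ≤ (1 + t) * t⁻¹ := by
        unfold oneAddMulLogOneAddInv; gcongr; linarith
    _ = 1 + t⁻¹ := by field_simp; ring

lemma eq_mul_div_sub_one_iff {N Λ α D : ℝ} (hΛ : Λ ≠ 0) (hD : D ≠ 0) :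
    N = Λ * (α / D - 1) ↔ (1 + N / Λ) * D = α := by
  constructor
  · rintro rfl; field_simp; ring
  · intro h; rw [← h]; field_simp; ring

noncomputable def reuseBalance (α N Λ : ℝ) : ℝ :=
  (1 + N / Λ) * (2 * oneAddMulLogOneAddInv (Λ ^ (α / 2)))

section reuseBalance

variable {α N : ℝ}

lemma eq_iff_reuseBalance_eq {Λ : ℝ} (hΛ : 0 < Λ) :
    N = Λ * (α / (2 * (1 + Λ ^ (α / 2)) * log (1 + Λ ^ (-(α / 2)))) - 1) ↔
      reuseBalance α N Λ = α := by
  have hD : 0 < 2 * oneAddMulLogOneAddInv (Λ ^ (α / 2)) := by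
    linarith [one_le_oneAddMulLogOneAddInv (rpow_pos_of_pos hΛ (α / 2))]
  rw [rpow_neg hΛ.le, mul_assoc, ← oneAddMulLogOneAddInv, reuseBalance]
  exact eq_mul_div_sub_one_iff hΛ.ne' hD.ne'

lemma strictAntiOn_reuseBalance (hα : 0 < α) (hN : 0 ≤ N) :
    StrictAntiOn (reuseBalance α N) (Set.Ioi 0) := by
  intro x hx y hy hxy
  have hx : 0 < x := hx
  have hy : 0 < y := hy
  have hrpow : x ^ (α / 2) < y ^ (α / 2) := rpow_lt_rpow hx.le hxy (by linarith)
  have hg := strictAntiOn_oneAddMulLogOneAddInv (rpow_pos_of_pos hx (α / 2))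
    (rpow_pos_of_pos hy (α / 2)) hrpow
  have hgy := one_le_oneAddMulLogOneAddInv (rpow_pos_of_pos hy (α / 2))
  apply mul_lt_mul_of_le_of_lt_of_pos_of_nonneg
  · gcongr
  · linarith
  · positivity
  · linarith

lemma continuousOn_reuseBalance : ContinuousOn (reuseBalance α N) (Set.Ioi 0) := by
  intro Λ hΛ
  have hΛ : 0 < Λ := hΛ
  have hg : ContinuousAt (fun x : ℝ => oneAddMulLogOneAddInv (x ^ (α / 2))) Λ :=
    (hasDerivAt_oneAddMulLogOneAddInv (rpow_pos_of_pos hΛ _)).continuousAt.comp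
      (f := fun x : ℝ => x ^ (α / 2)) (continuousAt_rpow_const _ _ (Or.inl hΛ.ne'))
  exact ((continuousAt_const.add (continuousAt_const.div continuousAt_id hΛ.ne')).mul
    (continuousAt_const.mul hg)).continuousWithinAt

lemma two_mul_le_reuseBalance (hN : 0 ≤ N) {Λ : ℝ} (hΛ : 0 < Λ) :
    2 * (1 + N / Λ) ≤ reuseBalance α N Λ := by
  have := one_le_oneAddMulLogOneAddInv (rpow_pos_of_pos hΛ (α / 2))
  unfold reuseBalance
  nlinarith [div_nonneg hN hΛ.le]

lemma reuseBalance_le (hN : 0 ≤ N) {Λ : ℝ} (hΛ : 0 < Λ) :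
    reuseBalance α N Λ ≤ 2 * (1 + N / Λ) * (1 + Λ ^ (-(α / 2))) := by
  have := oneAddMulLogOneAddInv_le (rpow_pos_of_pos hΛ (α / 2))
  rw [rpow_neg hΛ.le, mul_comm 2, mul_assoc, reuseBalance]
  gcongr

lemma eventually_reuseBalance_lt (hα : 2 < α) (hN : 0 ≤ N) :
    ∀ᶠ Λ in atTop, reuseBalance α N Λ < α := by
  have hbound : Tendsto (fun Λ : ℝ => 2 * (1 + N / Λ) * (1 + Λ ^ (-(α / 2)))) atTop
      (𝓝 (2 * (1 + 0) * (1 + 0))) :=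
    ((tendsto_const_nhds.add (tendsto_const_nhds.div_atTop tendsto_id)).const_mul 2).mul
      (tendsto_const_nhds.add (tendsto_rpow_neg_atTop (by linarith)))
  filter_upwards [hbound.eventually (gt_mem_nhds (by linarith : 2 * (1 + 0) * (1 + 0) < α)),
    eventually_gt_atTop 0] with Λ hlt hΛ
  exact (reuseBalance_le hN hΛ).trans_lt hlt

lemma existsUnique_reuseBalance_eq (hα : 2 < α) (hN : 0 < N) :
    ∃! Λ : ℝ, 0 < Λ ∧ reuseBalance α N Λ = α := by
  set Λ₀ := 2 * N / (α - 2) with hΛ₀def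
  have hΛ₀ : 0 < Λ₀ := div_pos (by linarith) (by linarith)
  have hαle : α ≤ reuseBalance α N Λ₀ := by
    have := two_mul_le_reuseBalance (α := α) hN.le hΛ₀
    have hNΛ₀ : N / Λ₀ = (α - 2) / 2 := by rw [hΛ₀def]; field_simp
    linarith
  obtain ⟨Λ₁, hlt, hΛ₀₁⟩ :=
    ((eventually_reuseBalance_lt hα hN.le).and (eventually_gt_atTop Λ₀)).exists
  have hcont : ContinuousOn (reuseBalance α N) (Set.Icc Λ₀ Λ₁) :=
    continuousOn_reuseBalance.mono fun x hx => hΛ₀.trans_le hx.1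
  obtain ⟨Λ, hΛmem, hΛeq⟩ := intermediate_value_Icc' hΛ₀₁.le hcont ⟨hlt.le, hαle⟩
  have hΛ : 0 < Λ := hΛ₀.trans_le hΛmem.1
  refine ⟨Λ, ⟨hΛ, hΛeq⟩, fun Λ' ⟨hΛ', hΛ'eq⟩ => ?_⟩
  exact (strictAntiOn_reuseBalance (by linarith) hN.le).injOn hΛ' hΛ (hΛ'eq.trans hΛeq.symm)

end reuseBalance

theorem unique_Lambda2_star_general (α N₁ : ℝ) (hα : 2 < α) (hN₁ : 0 < N₁) :
    ∃! Λ : ℝ, 0 < Λ ∧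
      N₁ = Λ * (α / (2 * (1 + Λ ^ (α / 2)) * Real.log (1 + Λ ^ (-(α / 2)))) - 1) := by
  obtain ⟨Λ, ⟨hΛ, hΛeq⟩, huniq⟩ := existsUnique_reuseBalance_eq hα hN₁
  refine ⟨Λ, ⟨hΛ, (eq_iff_reuseBalance_eq hΛ).mpr hΛeq⟩, fun Λ' ⟨hΛ', hΛ'eq⟩ => ?_⟩
  exact huniq Λ' ⟨hΛ', (eq_iff_reuseBalance_eq hΛ').mp hΛ'eq⟩

theorem unique_Lambda2_star (α N₁ : ℝ) (hα : 2 < α) (hα4 : α < 4) (hN₁ : 0 < N₁) :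
    ∃! Λ : ℝ, 0 < Λ ∧
      N₁ = Λ * (α / (2 * (1 + Λ ^ (α / 2)) * Real.log (1 + Λ ^ (-(α / 2)))) - 1) :=
  unique_Lambda2_star_general α N₁ hα hN₁
end

section
/- As x → ∞, x·(α/(2(1 + x^{α/2})·log(1 + x^{−α/2})) − 1) is asymptotic to (α/2 − 1)·x; equivalently, if Λ₂*(N₁) denotes the solution of N₁ = Λ·(α/(2(1+Λ^{α/2})·log(1+Λ^{−α/2})) − 1) for 2 < α < 4, then Λ₂*(N₁)/N₁ → 2/(α−2) as N₁ → ∞. -/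
/-! The equilibrium equation reads `N₁ = Λ · r(Λ)` with
`r(Λ) = α / (2 (1 + Λ^{α/2}) log (1 + Λ^{-α/2})) - 1`. Since `(1 + y) log (1 + y⁻¹) → 1` as
`y → ∞`, `r(Λ) → α/2 - 1`, which gives the first limit. On `(0, b]` the product `Λ · r(Λ)` is
bounded, so `Λ₂*(N₁) → ∞` as `N₁ → ∞`, and then `Λ₂*(N₁) / N₁ = 1 / r(Λ₂*(N₁)) → 2 / (α - 2)`. -/

open Real Filter

noncomputable def densityRatio (α Λ : ℝ) : ℝ :=
  α / (2 * (1 + Λ ^ (α / 2)) * Real.log (1 + Λ ^ (-(α / 2)))) - 1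

lemma tendsto_one_add_mul_log_one_add_inv_atTop :
    Tendsto (fun x : ℝ => (1 + x) * Real.log (1 + x⁻¹)) atTop (nhds 1) := by
  have hmul : Tendsto (fun x : ℝ => x * Real.log (1 + x⁻¹)) atTop (nhds 1) := by
    simpa [one_div] using tendsto_mul_log_one_add_div_atTop (1 : ℝ)
  have hlog : Tendsto (fun x : ℝ => Real.log (1 + x⁻¹)) atTop (nhds 0) := by
    simpa [Function.comp_def] using
      (continuousAt_log (by norm_num : (1 + 0 : ℝ) ≠ 0)).tendsto.comp
        (tendsto_inv_atTop_zero.const_add 1)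
  simpa [add_mul] using hlog.add hmul

lemma tendsto_one_add_rpow_mul_log_one_add_rpow_neg_atTop {a : ℝ} (ha : 0 < a) :
    Tendsto (fun Λ : ℝ => (1 + Λ ^ a) * Real.log (1 + Λ ^ (-a))) atTop (nhds 1) := by
  refine (tendsto_one_add_mul_log_one_add_inv_atTop.comp (tendsto_rpow_atTop ha)).congr' ?_
  filter_upwards [eventually_gt_atTop 0] with Λ hΛ
  simp [rpow_neg hΛ.le]

lemma tendsto_densityRatio_atTop {α : ℝ} (hα : 0 < α) :
    Tendsto (densityRatio α) atTop (nhds (α / 2 - 1)) := by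
  have hden := (tendsto_one_add_rpow_mul_log_one_add_rpow_neg_atTop (half_pos hα)).const_mul 2
  simp only [mul_one, ← mul_assoc] at hden
  exact ((tendsto_const_nhds (x := α)).div hden two_ne_zero).sub_const 1

lemma mul_densityRatio_le {α Λ b : ℝ} (hα : 0 < α) (hΛ : 0 < Λ) (hΛb : Λ ≤ b) :
    Λ * densityRatio α Λ ≤ b * (α / (2 * Real.log (1 + b ^ (-(α / 2))))) := by
  have hb_pow : 0 < b ^ (-(α / 2)) := rpow_pos_of_pos (hΛ.trans_le hΛb) _
  have hlog_pos : 0 < Real.log (1 + b ^ (-(α / 2))) := log_pos (by linarith)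
  have hlog_le : Real.log (1 + b ^ (-(α / 2))) ≤ Real.log (1 + Λ ^ (-(α / 2))) :=
    log_le_log (by linarith)
      (by linarith [rpow_le_rpow_of_nonpos hΛ hΛb (by linarith : -(α / 2) ≤ 0)])
  have hpow : 0 ≤ Λ ^ (α / 2) := rpow_nonneg hΛ.le _
  have hratio : densityRatio α Λ ≤ α / (2 * Real.log (1 + b ^ (-(α / 2)))) := by
    calc densityRatio α Λ
        ≤ α / (2 * (1 + Λ ^ (α / 2)) * Real.log (1 + Λ ^ (-(α / 2)))) := sub_le_self _ zero_le_one
      _ ≤ α / (2 * Real.log (1 + b ^ (-(α / 2)))) :=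
          div_le_div_of_nonneg_left hα.le (by positivity) (by nlinarith)
  calc Λ * densityRatio α Λ ≤ Λ * (α / (2 * Real.log (1 + b ^ (-(α / 2))))) :=
        mul_le_mul_of_nonneg_left hratio hΛ.le
    _ ≤ b * (α / (2 * Real.log (1 + b ^ (-(α / 2))))) :=
        mul_le_mul_of_nonneg_right hΛb (by positivity)

lemma tendsto_atTop_of_eq_mul_densityRatio {α : ℝ} (hα : 0 < α) {L : ℝ → ℝ}
    (hL : ∀ N : ℝ, 0 < N → 0 < L N ∧ N = L N * densityRatio α (L N)) :
    Tendsto L atTop atTop := by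
  refine tendsto_atTop.2 fun b => ?_
  set M := b * (α / (2 * Real.log (1 + b ^ (-(α / 2)))))
  filter_upwards [eventually_gt_atTop (max 0 M)] with N hN
  obtain ⟨hLpos, hEq⟩ := hL N ((le_max_left _ _).trans_lt hN)
  by_contra! hLb
  have := mul_densityRatio_le hα hLpos hLb.le
  linarith [le_max_right 0 M]

theorem asymptotic_Lambda2_star_general (α : ℝ) (hα : 2 < α) (L : ℝ → ℝ)
    (hL : ∀ N₁ : ℝ, 0 < N₁ → 0 < L N₁ ∧
      N₁ = L N₁ * (α / (2 * (1 + (L N₁) ^ (α / 2)) * Real.log (1 + (L N₁) ^ (-(α / 2)))) - 1)) :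
    (Tendsto (fun x : ℝ =>
        (x * (α / (2 * (1 + x ^ (α / 2)) * Real.log (1 + x ^ (-(α / 2)))) - 1)) / ((α / 2 - 1) * x))
      atTop (nhds 1)) ∧
    Tendsto (fun N₁ : ℝ => L N₁ / N₁) atTop (nhds (2 / (α - 2))) := by
  have hlim := tendsto_densityRatio_atTop (by linarith : 0 < α)
  have hc : α / 2 - 1 ≠ 0 := by linarith
  constructor
  · refine ((hlim.div_const (α / 2 - 1)).congr' ?_).trans_eq (congrArg nhds (div_self hc))
    filter_upwards [eventually_gt_atTop 0] with x hx
    rw [mul_comm (α / 2 - 1), mul_div_mul_left _ _ hx.ne', densityRatio]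
  · have hLtop := tendsto_atTop_of_eq_mul_densityRatio (by linarith) hL
    have hinv : (α / 2 - 1)⁻¹ = 2 / (α - 2) := by field_simp
    refine (((hlim.comp hLtop).inv₀ hc).congr' ?_).trans_eq (congrArg nhds hinv)
    filter_upwards [eventually_gt_atTop 0] with N hN
    have hEq : N = L N * densityRatio α (L N) := (hL N hN).2
    have hr : densityRatio α (L N) ≠ 0 := fun h0 => by
      rw [h0, mul_zero] at hEq; exact hN.ne' hEq
    rw [Function.comp_apply, eq_div_iff hN.ne', inv_mul_eq_iff_eq_mul₀ hr, mul_comm]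
    exact hEq

theorem asymptotic_Lambda2_star (α : ℝ) (hα : 2 < α) (hα4 : α < 4) (L : ℝ → ℝ)
    (hL : ∀ N₁ : ℝ, 0 < N₁ → 0 < L N₁ ∧
      N₁ = L N₁ * (α / (2 * (1 + (L N₁) ^ (α / 2)) * Real.log (1 + (L N₁) ^ (-(α / 2)))) - 1)) :
    (Tendsto (fun x : ℝ =>
        (x * (α / (2 * (1 + x ^ (α / 2)) * Real.log (1 + x ^ (-(α / 2)))) - 1)) / ((α / 2 - 1) * x))
      atTop (nhds 1)) ∧
    Tendsto (fun N₁ : ℝ => L N₁ / N₁) atTop (nhds (2 / (α - 2))) :=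
  asymptotic_Lambda2_star_general α hα L hL
end

section
/- For α > 4, the value Λ₁ = Λ₂ = √(Λ*(α/2)) satisfies α/(2(1 + Λ₁^{α/2})·log(1 + Λ₁^{−α/2})) − 1 = 1, where Λ*(·) is defined by α'/2 = (1 + Λ*(α')^{α'/2})·log(1 + Λ*(α')^{−α'/2}). Moreover this Λ₁ is the unique positive solution of α/(2(1 + x^{α/2})·log(1 + x^{−α/2})) = 2. -/
/-!
With `t = x ^ (α / 2)`, the quantity `(1 + x ^ (α / 2)) * log (1 + x ^ (-(α / 2)))` is
`g t = (1 + t) * log (1 + 1 / t)`, and `g' t = log (1 + 1 / t) - 1 / t < 0`. So the quantity is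
strictly decreasing in `x > 0`, and the equation `α / (2 * (…)) = 2`, i.e. `(…) = α / 4`, has at
most one positive solution. The defining equation of `Λ*(α / 2) = y` says exactly that `x = √y`
is one.
-/

open Real Set

lemma hasDerivAt_one_add_mul_log_one_add_inv {t : ℝ} (ht : 0 < t) :
    HasDerivAt (fun t : ℝ => (1 + t) * log (1 + t⁻¹)) (log (1 + t⁻¹) - t⁻¹) t := by
  have hlog : HasDerivAt (fun t : ℝ => log (1 + t⁻¹)) (-(t ^ 2)⁻¹ / (1 + t⁻¹)) t :=
    ((hasDerivAt_inv ht.ne').const_add 1).log (by positivity)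
  refine (((hasDerivAt_id' t).const_add 1).mul hlog).congr_deriv ?_
  field_simp
  ring

lemma strictAntiOn_one_add_mul_log_one_add_inv :
    StrictAntiOn (fun t : ℝ => (1 + t) * log (1 + t⁻¹)) (Ioi 0) := by
  refine strictAntiOn_of_deriv_neg (convex_Ioi 0)
    (fun t ht => (hasDerivAt_one_add_mul_log_one_add_inv ht).continuousAt.continuousWithinAt)
    fun t ht => ?_
  rw [interior_Ioi] at ht
  have ht_inv : 0 < t⁻¹ := inv_pos.2 ht
  rw [(hasDerivAt_one_add_mul_log_one_add_inv ht).deriv, sub_neg]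
  linarith [log_lt_sub_one_of_pos (x := 1 + t⁻¹) (by linarith) (by linarith)]

lemma strictAntiOn_one_add_rpow_mul_log_one_add_rpow_neg {p : ℝ} (hp : 0 < p) :
    StrictAntiOn (fun x : ℝ => (1 + x ^ p) * log (1 + x ^ (-p))) (Ioi 0) := by
  intro x hx z hz hxz
  have h := strictAntiOn_one_add_mul_log_one_add_inv (rpow_pos_of_pos hx p)
    (rpow_pos_of_pos hz p) (rpow_lt_rpow hx.le hxz hp)
  simpa only [rpow_neg hx.le, rpow_neg hz.le] using h

lemma sqrt_rpow {y : ℝ} (hy : 0 ≤ y) (p : ℝ) : √y ^ p = y ^ (p / 2) := by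
  rw [sqrt_eq_rpow, ← rpow_mul hy]
  ring_nf

theorem symmetric_NE_point (α y : ℝ) (hα : 4 < α) (hy : 0 < y)
    (hLstar : (α / 2) / 2 = (1 + y ^ ((α / 2) / 2)) * Real.log (1 + y ^ (-((α / 2) / 2)))) :
    (α / (2 * (1 + (Real.sqrt y) ^ (α / 2)) * Real.log (1 + (Real.sqrt y) ^ (-(α / 2)))) - 1 = 1) ∧
    ∀ x : ℝ, 0 < x →
      α / (2 * (1 + x ^ (α / 2)) * Real.log (1 + x ^ (-(α / 2)))) = 2 → x = Real.sqrt y := by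
  set f := fun x : ℝ => (1 + x ^ (α / 2)) * log (1 + x ^ (-(α / 2))) with hf
  have hf_sqrt : f √y = α / 4 := by
    simp only [hf, sqrt_rpow hy.le, neg_div]
    linarith
  have hα0 : α ≠ 0 := by linarith
  refine ⟨?_, fun x hx hx2 => ?_⟩
  · rw [mul_assoc]
    change α / (2 * f √y) - 1 = 1
    rw [hf_sqrt]
    field_simp
    norm_num
  · rw [mul_assoc] at hx2
    change α / (2 * f x) = 2 at hx2
    have hfx_ne : f x ≠ 0 := by
      rintro h
      simp [h] at hx2
    have hfx : f x = α / 4 := by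
      field_simp at hx2
      linarith
    exact (strictAntiOn_one_add_rpow_mul_log_one_add_rpow_neg (by linarith)).injOn hx
      (sqrt_pos.2 hy) (hfx.trans hf_sqrt.symm)
end

section
/- For α > 4 and N₁, N₂ with √(Λ*(α/2)) < N₁ ≤ N₂, the unique Nash equilibrium of the Transformed Random Access Game lies in the interior of [0,N₁]×[0,N₂] and is the symmetric point (√(Λ*(α/2)), √(Λ*(α/2))). -/
/-!
Write `b = α / 2` and `f_c(x) = x log (1 + x ^ (-b)) exp (-c/x - 1)` for the payoff
against an opponent playing `c`. Its elasticity is `x f_c'(x) / f_c(x) = 1 + c/x - U(x)`,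
where `U(x) = b t / ((1 + t) log (1 + t))` with `t = x ^ (-b)` is strictly increasing in
`x` because `(1 + t) log (1 + t) / t` increases in `t`. The equation defining `Λ*` says
exactly `U(√Λ*) = 2`, so `s = √Λ*` is a zero of the elasticity of `f_s`, hence the best
reply to itself.

Conversely, at an equilibrium with `Λ₂ ≤ Λ₁` both strategies are positive, and the
first-order condition of player 1 gives `U(Λ₁) ≤ 1 + Λ₂/Λ₁ ≤ 2 = U(s)`, so `Λ₁ ≤ s` and
both strategies are interior. Both first-order conditions then hold with equality, and
`U(Λ₂) ≤ U(Λ₁)` reads `Λ₁/Λ₂ ≤ Λ₂/Λ₁`, forcing `Λ₁ = Λ₂` and then `U(Λ₁) = 2`.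
-/

open Real Set

lemma IsMaxOn.hasDerivAt_nonneg_of_Icc {f : ℝ → ℝ} {a b x f' : ℝ}
    (h : IsMaxOn f (Icc a b) x) (hf : HasDerivAt f f' x) (hax : a < x) (hxb : x ≤ b) :
    0 ≤ f' := by
  have hcone : (a - x) ∈ posTangentConeAt (Icc a b) x :=
    mem_posTangentConeAt_of_segment_subset <| by
      rw [add_sub_cancel]
      exact (convex_Icc a b).segment_subset ⟨hax.le, hxb⟩ ⟨le_rfl, hax.le.trans hxb⟩
  have := h.localize.hasFDerivWithinAt_nonpos hf.hasFDerivAt.hasFDerivWithinAt hcone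
  rw [ContinuousLinearMap.toSpanSingleton_apply, smul_eq_mul] at this
  exact nonneg_of_mul_nonpos_right this (sub_neg.2 hax)

lemma IsMaxOn.hasDerivAt_eq_zero_of_Icc {f : ℝ → ℝ} {a b x f' : ℝ}
    (h : IsMaxOn f (Icc a b) x) (hf : HasDerivAt f f' x) (hax : a < x) (hxb : x < b) :
    f' = 0 :=
  (h.isLocalMax (Icc_mem_nhds hax hxb)).hasDerivAt_eq_zero hf

lemma strictMonoOn_one_add_mul_log_one_add_div :
    StrictMonoOn (fun t : ℝ => (1 + t) * log (1 + t) / t) (Ioi 0) := by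
  have hderiv : ∀ t ∈ Ioi (0 : ℝ), HasDerivAt (fun t : ℝ => (1 + t) * log (1 + t) / t)
      ((t - log (1 + t)) / t ^ 2) t := by
    intro t (ht : 0 < t)
    have h1 : HasDerivAt (fun t : ℝ => 1 + t) 1 t := (hasDerivAt_id t).const_add 1
    have h2 := (h1.mul (h1.log (by positivity))).div (hasDerivAt_id t) ht.ne'
    refine h2.congr_deriv ?_
    simp only [id, Pi.mul_apply]
    field_simp
    ring
  refine strictMonoOn_of_deriv_pos (convex_Ioi 0)
    (fun t ht => (hderiv t ht).continuousAt.continuousWithinAt) fun t ht => ?_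
  rw [interior_Ioi] at ht
  rw [(hderiv t ht).deriv]
  replace ht : 0 < t := ht
  have : log (1 + t) < t := by
    linarith [log_lt_sub_one_of_pos (x := 1 + t) (by linarith) (by linarith)]
  exact div_pos (by linarith) (by positivity)

/-- Minus the elasticity `x g'(x) / g(x)` of the rate `g(x) = log (1 + x ^ (-b))`. -/
noncomputable def rateElasticity (b x : ℝ) : ℝ :=
  b * x ^ (-b) / ((1 + x ^ (-b)) * log (1 + x ^ (-b)))

lemma strictMonoOn_rateElasticity {b : ℝ} (hb : 0 < b) :
    StrictMonoOn (rateElasticity b) (Ioi 0) := by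
  intro x₁ (hx₁ : 0 < x₁) x₂ (hx₂ : 0 < x₂) h12
  have ht₁ : 0 < x₁ ^ (-b) := rpow_pos_of_pos hx₁ _
  have ht₂ : 0 < x₂ ^ (-b) := rpow_pos_of_pos hx₂ _
  have ht : x₂ ^ (-b) < x₁ ^ (-b) := rpow_lt_rpow_of_neg hx₁ h12 (by linarith)
  have hV := strictMonoOn_one_add_mul_log_one_add_div ht₂ ht₁ ht
  have hV₂ : 0 < (1 + x₂ ^ (-b)) * log (1 + x₂ ^ (-b)) / x₂ ^ (-b) :=
    div_pos (mul_pos (by linarith) (log_pos (by linarith))) ht₂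
  have hform : ∀ x : ℝ,
      rateElasticity b x = b / ((1 + x ^ (-b)) * log (1 + x ^ (-b)) / x ^ (-b)) :=
    fun x => by rw [rateElasticity, div_div_eq_mul_div, mul_comm b, mul_div_assoc]
  rw [hform x₁, hform x₂]
  exact div_lt_div_of_pos_left hb hV₂ hV

lemma rateElasticity_sqrt_eq_two {b y : ℝ} (hb : b ≠ 0) (hy : 0 < y)
    (h : b / 2 = (1 + y ^ (b / 2)) * log (1 + y ^ (-(b / 2)))) :
    rateElasticity b (√y) = 2 := by
  have ht : √y ^ (-b) = y ^ (-(b / 2)) := by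
    rw [sqrt_eq_rpow, ← rpow_mul hy.le]
    ring_nf
  have hinv : y ^ (b / 2) = (y ^ (-(b / 2)))⁻¹ := by rw [rpow_neg hy.le, inv_inv]
  set t := y ^ (-(b / 2))
  have htpos : 0 < t := rpow_pos_of_pos hy _
  have hkey : (1 + t) * log (1 + t) = t * (b / 2) := by
    rw [h, hinv]
    field_simp
    ring
  rw [rateElasticity, ht, hkey]
  field_simp

noncomputable def payoff (b c x : ℝ) : ℝ := x * log (1 + x ^ (-b)) * exp (-(c / x) - 1)

noncomputable def payoffElasticity (b c x : ℝ) : ℝ := 1 + c / x - rateElasticity b x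

lemma payoff_zero (b c : ℝ) : payoff b c 0 = 0 := by simp [payoff]

lemma payoff_pos (b c : ℝ) {x : ℝ} (hx : 0 < x) : 0 < payoff b c x :=
  mul_pos (mul_pos hx (log_pos (by linarith [rpow_pos_of_pos hx (-b)]))) (exp_pos _)

lemma hasDerivAt_payoff (b c : ℝ) {x : ℝ} (hx : 0 < x) :
    HasDerivAt (payoff b c) (payoff b c x / x * payoffElasticity b c x) x := by
  have ht : 0 < x ^ (-b) := rpow_pos_of_pos hx _
  have hg : 0 < log (1 + x ^ (-b)) := log_pos (by linarith)
  have hpow : HasDerivAt (fun z : ℝ => 1 + z ^ (-b)) (-b * x ^ (-b - 1)) x := by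
    simpa using (hasDerivAt_rpow_const (p := -b) (Or.inl hx.ne')).const_add 1
  have hexp : HasDerivAt (fun z : ℝ => -(c / z) - 1) (c / x ^ 2) x := by
    simpa [div_eq_mul_inv] using ((hasDerivAt_inv hx.ne').const_mul c).neg.sub_const 1
  have h := ((hasDerivAt_id x).mul (hpow.log (by linarith))).mul hexp.exp
  refine h.congr_deriv ?_
  have hxt : x ^ (-b - 1) = x ^ (-b) / x := by rw [rpow_sub_one hx.ne']
  simp only [id, Pi.mul_apply, payoff, payoffElasticity, rateElasticity, hxt]
  field_simp
  ring

lemma payoffElasticity_self (b : ℝ) {x : ℝ} (hx : x ≠ 0) :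
    payoffElasticity b x x = 2 - rateElasticity b x := by
  rw [payoffElasticity, div_self hx]
  ring

lemma strictAntiOn_payoffElasticity {b c : ℝ} (hb : 0 < b) (hc : 0 ≤ c) :
    StrictAntiOn (payoffElasticity b c) (Ioi 0) := by
  intro x₁ (hx₁ : 0 < x₁) x₂ hx₂ h12
  have hU := strictMonoOn_rateElasticity hb hx₁ hx₂ h12
  have : c / x₂ ≤ c / x₁ := by gcongr
  simp only [payoffElasticity]
  linarith

lemma isMaxOn_payoff_Ici {b c s : ℝ} (hb : 0 < b) (hc : 0 ≤ c) (hs : 0 < s)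
    (hψ : payoffElasticity b c s = 0) : IsMaxOn (payoff b c) (Ici 0) s := by
  have hcont : ∀ x : ℝ, 0 < x → ContinuousAt (payoff b c) x := fun x hx =>
    (hasDerivAt_payoff b c hx).continuousAt
  have hanti := strictAntiOn_payoffElasticity hb hc
  have hmono : StrictMonoOn (payoff b c) (Ioc 0 s) := by
    refine strictMonoOn_of_deriv_pos (convex_Ioc 0 s)
      (fun x hx => (hcont x hx.1).continuousWithinAt) fun x hx => ?_
    rw [interior_Ioc] at hx
    rw [(hasDerivAt_payoff b c hx.1).deriv]
    refine mul_pos (div_pos (payoff_pos b c hx.1) hx.1) ?_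
    simpa [hψ] using hanti hx.1 hs hx.2
  have hanti' : StrictAntiOn (payoff b c) (Ici s) := by
    refine strictAntiOn_of_deriv_neg (convex_Ici s)
      (fun x hx => (hcont x (hs.trans_le hx)).continuousWithinAt) fun x hx => ?_
    rw [interior_Ici] at hx
    have hx0 : 0 < x := hs.trans hx
    rw [(hasDerivAt_payoff b c hx0).deriv]
    refine mul_neg_of_pos_of_neg (div_pos (payoff_pos b c hx0) hx0) ?_
    simpa [hψ] using hanti hs hx0 hx
  intro x (hx : 0 ≤ x)
  rcases hx.eq_or_lt with rfl | hx0
  · exact (payoff_zero b c).trans_le (payoff_pos b c hs).le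
  rcases le_total x s with hxs | hsx
  · exact hmono.monotoneOn ⟨hx0, hxs⟩ ⟨hs, le_rfl⟩ hxs
  · exact hanti'.antitoneOn self_mem_Ici hsx hsx

lemma pos_of_isMaxOn_payoff {b c N Λ : ℝ} (hN : 0 < N) (hΛ : Λ ∈ Icc 0 N)
    (h : IsMaxOn (payoff b c) (Icc 0 N) Λ) : 0 < Λ := by
  refine hΛ.1.lt_of_ne' fun hΛ0 => ?_
  have hNΛ : payoff b c N ≤ payoff b c Λ := h ⟨hN.le, le_rfl⟩
  rw [hΛ0, payoff_zero] at hNΛ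
  exact (payoff_pos b c hN).not_ge hNΛ

lemma payoffElasticity_nonneg_of_isMaxOn {b c N Λ : ℝ} (hΛ : 0 < Λ) (hΛN : Λ ≤ N)
    (h : IsMaxOn (payoff b c) (Icc 0 N) Λ) : 0 ≤ payoffElasticity b c Λ :=
  (mul_nonneg_iff_of_pos_left (div_pos (payoff_pos b c hΛ) hΛ)).1 <|
    h.hasDerivAt_nonneg_of_Icc (hasDerivAt_payoff b c hΛ) hΛ hΛN

lemma payoffElasticity_eq_zero_of_isMaxOn {b c N Λ : ℝ} (hΛ : 0 < Λ) (hΛN : Λ < N)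
    (h : IsMaxOn (payoff b c) (Icc 0 N) Λ) : payoffElasticity b c Λ = 0 :=
  (mul_eq_zero.1 <| h.hasDerivAt_eq_zero_of_Icc (hasDerivAt_payoff b c hΛ) hΛ hΛN).resolve_left
    (div_pos (payoff_pos b c hΛ) hΛ).ne'

lemma eq_of_payoffElasticity_eq_zero {b m M : ℝ} (hb : 0 < b) (hm : 0 < m) (hmM : m ≤ M)
    (hM : payoffElasticity b m M = 0) (hm' : payoffElasticity b M m = 0) : m = M := by
  have hM0 : 0 < M := hm.trans_le hmM
  have hU := (strictMonoOn_rateElasticity hb).monotoneOn hm hM0 hmM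
  simp only [payoffElasticity] at hM hm'
  have : M / m ≤ m / M := by linarith
  rw [div_le_div_iff₀ hm hM0] at this
  nlinarith

lemma eq_of_isMaxOn_payoff_of_le {b s N N' m M : ℝ} (hb : 0 < b) (hs : 0 < s)
    (hU : rateElasticity b s = 2) (hsN : s < N) (hsN' : s < N') (hM : M ∈ Icc 0 N)
    (hm : m ∈ Icc 0 N') (hmM : m ≤ M) (hmaxM : IsMaxOn (payoff b m) (Icc 0 N) M)
    (hmaxm : IsMaxOn (payoff b M) (Icc 0 N') m) : M = s ∧ m = s := by
  have hM0 := pos_of_isMaxOn_payoff (hs.trans hsN) hM hmaxM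
  have hm0 := pos_of_isMaxOn_payoff (hs.trans hsN') hm hmaxm
  have hMs : M ≤ s := by
    have hψ := payoffElasticity_nonneg_of_isMaxOn hM0 hM.2 hmaxM
    have hmM' : m / M ≤ 1 := div_le_one_of_le₀ hmM hM0.le
    rw [payoffElasticity] at hψ
    exact (strictMonoOn_rateElasticity hb).le_iff_le hM0 hs |>.1 (by linarith)
  have hψM := payoffElasticity_eq_zero_of_isMaxOn hM0 (hMs.trans_lt hsN) hmaxM
  have hψm := payoffElasticity_eq_zero_of_isMaxOn hm0 ((hmM.trans hMs).trans_lt hsN') hmaxm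
  obtain rfl := eq_of_payoffElasticity_eq_zero hb hm0 hmM hψM hψm
  rw [payoffElasticity_self b hm0.ne', sub_eq_zero, ← hU] at hψM
  have hms := (strictMonoOn_rateElasticity hb).injOn hm0 hs hψM.symm
  exact ⟨hms, hms⟩

theorem unique_NE_partial_partial (α y N₁ N₂ : ℝ) (hα : 4 < α) (hy : 0 < y)
    (hLstar : (α / 2) / 2 = (1 + y ^ ((α / 2) / 2)) * Real.log (1 + y ^ (-((α / 2) / 2))))
    (hN₁ : Real.sqrt y < N₁) (hN : N₁ ≤ N₂) :
    (0 < Real.sqrt y ∧ Real.sqrt y < N₁ ∧ Real.sqrt y < N₂) ∧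
    (IsMaxOn (fun x : ℝ => x * Real.log (1 + x ^ (-(α / 2))) * Real.exp (-(Real.sqrt y / x) - 1))
        (Set.Icc 0 N₁) (Real.sqrt y) ∧
     IsMaxOn (fun x : ℝ => x * Real.log (1 + x ^ (-(α / 2))) * Real.exp (-(Real.sqrt y / x) - 1))
        (Set.Icc 0 N₂) (Real.sqrt y)) ∧
    (∀ Λ₁ Λ₂ : ℝ, Λ₁ ∈ Set.Icc 0 N₁ → Λ₂ ∈ Set.Icc 0 N₂ →
      IsMaxOn (fun x : ℝ => x * Real.log (1 + x ^ (-(α / 2))) * Real.exp (-(Λ₂ / x) - 1))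
        (Set.Icc 0 N₁) Λ₁ →
      IsMaxOn (fun x : ℝ => x * Real.log (1 + x ^ (-(α / 2))) * Real.exp (-(Λ₁ / x) - 1))
        (Set.Icc 0 N₂) Λ₂ →
      Λ₁ = Real.sqrt y ∧ Λ₂ = Real.sqrt y) := by
  have hb : 0 < α / 2 := by linarith
  have hs : 0 < √y := sqrt_pos.2 hy
  have hsN₂ : √y < N₂ := hN₁.trans_le hN
  have hU : rateElasticity (α / 2) √y = 2 := rateElasticity_sqrt_eq_two hb.ne' hy hLstar
  have hmax : IsMaxOn (payoff (α / 2) √y) (Ici 0) √y :=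
    isMaxOn_payoff_Ici hb hs.le hs (by rw [payoffElasticity_self _ hs.ne', hU, sub_self])
  refine ⟨⟨hs, hN₁, hsN₂⟩, ⟨hmax.on_subset Icc_subset_Ici_self,
    hmax.on_subset Icc_subset_Ici_self⟩, fun Λ₁ Λ₂ h₁ h₂ hmax₁ hmax₂ => ?_⟩
  rcases le_total Λ₂ Λ₁ with h | h
  · exact eq_of_isMaxOn_payoff_of_le hb hs hU hN₁ hsN₂ h₁ h₂ h hmax₁ hmax₂
  · exact (eq_of_isMaxOn_payoff_of_le hb hs hU hsN₂ hN₁ h₂ h₁ h hmax₂ hmax₁).symm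
end

section
/- At any interior Nash equilibrium of the Transformed Random Access Game, Λ₁* = Λ₂*: the best-response function Λ₁*(Λ₂) defined implicitly by Λ₂/Λ₁ + 1 = α/(2(1 + Λ₁^{α/2})·log(1 + Λ₁^{−α/2})) is strictly monotonically increasing in Λ₂, which together with the symmetry of the utilities forces symmetric equilibria. -/
/-!
Substituting `t = Λ₁ ^ (α / 2)`, the right-hand side of the first-order condition becomes
`α / (2 φ t)` with `φ t = (1 + t) log (1 + t⁻¹)`, and `φ` is decreasing since
`φ' t = log (1 + t⁻¹) - t⁻¹ < 0`. So the ratio `Λ₂ / Λ₁` at a best response is nondecreasing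
in `Λ₁`, which makes `Λ₂ = Λ₁ · (Λ₂ / Λ₁)` strictly increasing in `Λ₁`: the best response is
strictly increasing. An asymmetric equilibrium `Λ₁ < Λ₂` would, after swapping the players,
give best responses that violate this monotonicity.
-/

open Real Set

lemma one_add_mul_log_one_add_inv_pos {t : ℝ} (ht : 0 < t) : 0 < (1 + t) * log (1 + t⁻¹) := by
  have : 0 < log (1 + t⁻¹) := log_pos (by simpa using ht)
  positivity

lemma monotoneOn_firstOrderRatio {α : ℝ} (hα : 0 < α) :
    MonotoneOn (fun b : ℝ => α / (2 * (1 + b ^ (α / 2)) * log (1 + b ^ (-(α / 2)))))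
      (Ioi 0) := by
  have hform : ∀ b : ℝ, 0 < b → α / (2 * (1 + b ^ (α / 2)) * log (1 + b ^ (-(α / 2)))) =
      α / (2 * ((1 + b ^ (α / 2)) * log (1 + (b ^ (α / 2))⁻¹))) := by
    intro b hb
    rw [rpow_neg hb.le, mul_assoc]
  intro b hb b' hb' hbb'
  have ht : 0 < b ^ (α / 2) := rpow_pos_of_pos hb _
  have htt' : b ^ (α / 2) ≤ b' ^ (α / 2) := rpow_le_rpow hb.le hbb' (by linarith)
  simp only [hform b hb, hform b' hb']
  have ht' := ht.trans_le htt'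
  refine div_le_div_of_nonneg_left hα.le (by linarith [one_add_mul_log_one_add_inv_pos ht']) ?_
  linarith [strictAntiOn_one_add_mul_log_one_add_inv.antitoneOn ht ht' htt']

lemma lt_of_div_add_one_eq_of_monotoneOn {R : ℝ → ℝ} (hR : MonotoneOn R (Ioi 0))
    {Λ Λ' b b' : ℝ} (hΛ : 0 ≤ Λ) (hb : 0 < b) (hb' : 0 < b')
    (h : Λ / b + 1 = R b) (h' : Λ' / b' + 1 = R b') (hlt : Λ < Λ') : b < b' := by
  by_contra! hb'b
  have hratio : Λ' / b' ≤ Λ / b := by linarith [hR hb' hb hb'b]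
  have : Λ' ≤ Λ :=
    calc Λ' = b' * (Λ' / b') := (mul_div_cancel₀ _ hb'.ne').symm
      _ ≤ b * (Λ' / b') := by gcongr; exact div_nonneg (hΛ.trans hlt.le) hb'.le
      _ ≤ b * (Λ / b) := by gcongr
      _ = Λ := mul_div_cancel₀ _ hb.ne'
  linarith

theorem interior_NE_symmetric (α : ℝ) (hα : 4 < α) :
    (∀ Λ₂ Λ₂' b b' : ℝ, 0 < Λ₂ → 0 < Λ₂' → 0 < b → 0 < b' →
      Λ₂ / b + 1 = α / (2 * (1 + b ^ (α / 2)) * Real.log (1 + b ^ (-(α / 2)))) →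
      Λ₂' / b' + 1 = α / (2 * (1 + b' ^ (α / 2)) * Real.log (1 + b' ^ (-(α / 2)))) →
      Λ₂ < Λ₂' → b < b') ∧
    (∀ Λ₁ Λ₂ : ℝ, 0 < Λ₁ → 0 < Λ₂ →
      Λ₂ / Λ₁ + 1 = α / (2 * (1 + Λ₁ ^ (α / 2)) * Real.log (1 + Λ₁ ^ (-(α / 2)))) →
      Λ₁ / Λ₂ + 1 = α / (2 * (1 + Λ₂ ^ (α / 2)) * Real.log (1 + Λ₂ ^ (-(α / 2)))) →
      Λ₁ = Λ₂) := by
  have hR := monotoneOn_firstOrderRatio (α := α) (by linarith)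
  refine ⟨fun _ _ _ _ hΛ _ hb hb' h h' hlt =>
    lt_of_div_add_one_eq_of_monotoneOn hR hΛ.le hb hb' h h' hlt, fun Λ₁ Λ₂ h₁ h₂ e₁ e₂ => ?_⟩
  rcases lt_trichotomy Λ₁ Λ₂ with hlt | heq | hgt
  · linarith [lt_of_div_add_one_eq_of_monotoneOn hR h₁.le h₂ h₁ e₂ e₁ hlt]
  · exact heq
  · linarith [lt_of_div_add_one_eq_of_monotoneOn hR h₂.le h₁ h₂ e₁ e₂ hgt]
end

section
/- For α > 2 and fixed s₁ > 0, define f(s₁,s₂) = (∫₀^∞ e^{−(s₁+s₂)x^{2/α}}/(1+x) dx) / (s₁·∫₀^∞ x^{2/α} e^{−(s₁+s₂)x^{2/α}}/(1+x) dx). Then f(s₁,s₂) is monotonically increasing in s₂. -/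
/-!
Write `w(x) = e^{-t x^c}/(1+x)` with `c = 2/α` and `t = s₁ + s₂`. Raising `s₂` from `t` to
`t' = t + Δ` multiplies `w` by the decreasing function `e^{-Δ x^c}` of `x^c`, so Chebyshev's
integral inequality for the oppositely ordered pair `x^c`, `e^{-Δ x^c}` against the weight `w`
gives `N(t) D(t') ≤ N(t') D(t)`, where `N` and `D` are the numerator and denominator integrals.
This is the monotonicity of `N/D`.
-/

open Real MeasureTheory Set

theorem Antivary.integral_mul_integral_mul_mul_le {ι : Type*} [MeasurableSpace ι]
    {μ : Measure ι} [SFinite μ] {w f g : ι → ℝ} (hfg : Antivary f g) (hw : 0 ≤ᵐ[μ] w)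
    (hw_int : Integrable w μ) (hwf : Integrable (fun x ↦ w x * f x) μ)
    (hwg : Integrable (fun x ↦ w x * g x) μ) (hwfg : Integrable (fun x ↦ w x * f x * g x) μ) :
    (∫ x, w x ∂μ) * ∫ x, w x * f x * g x ∂μ ≤
      (∫ x, w x * f x ∂μ) * ∫ x, w x * g x ∂μ := by
  have hpair : ∀ᵐ z ∂μ.prod μ, w z.1 * w z.2 * ((f z.1 - f z.2) * (g z.1 - g z.2)) ≤ 0 := by
    filter_upwards [Measure.quasiMeasurePreserving_fst.ae hw,
      Measure.quasiMeasurePreserving_snd.ae hw] with z h₁ h₂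
    exact mul_nonpos_of_nonneg_of_nonpos (mul_nonneg h₁ h₂)
      (antivary_iff_forall_mul_nonpos.mp hfg z.2 z.1)
  have hexpand : ∫ z, w z.1 * w z.2 * ((f z.1 - f z.2) * (g z.1 - g z.2)) ∂μ.prod μ =
      2 * ((∫ x, w x ∂μ) * ∫ x, w x * f x * g x ∂μ) -
        2 * ((∫ x, w x * f x ∂μ) * ∫ x, w x * g x ∂μ) := by
    have h₁ := hwfg.mul_prod hw_int
    have h₂ := hwf.mul_prod hwg
    have h₃ := hwg.mul_prod hwf
    have h₄ := hw_int.mul_prod hwfg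
    calc _ = ∫ z, (w z.1 * f z.1 * g z.1) * w z.2 - (w z.1 * f z.1) * (w z.2 * g z.2)
          - (w z.1 * g z.1) * (w z.2 * f z.2) + w z.1 * (w z.2 * f z.2 * g z.2) ∂μ.prod μ := by
          congr 1; ext z; ring
      _ = _ := by
          rw [integral_add (f := fun z ↦ _ - _ - _) ((h₁.sub h₂).sub h₃) h₄,
            integral_sub (f := fun z ↦ _ - _) (h₁.sub h₂) h₃, integral_sub h₁ h₂,
            integral_prod_mul (fun x ↦ w x * f x * g x) w,
            integral_prod_mul (fun x ↦ w x * f x) (fun x ↦ w x * g x),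
            integral_prod_mul (fun x ↦ w x * g x) (fun x ↦ w x * f x),
            integral_prod_mul w (fun x ↦ w x * f x * g x)]
          ring
  linarith [integral_nonpos_of_ae hpair]

theorem IntegrableOn.div_one_add_Ioi {f : ℝ → ℝ} (hf : IntegrableOn f (Ioi 0)) :
    IntegrableOn (fun x ↦ f x / (1 + x)) (Ioi 0) := by
  refine hf.mul_bdd (c := 1)
    (by fun_prop : Measurable fun x : ℝ ↦ (1 + x)⁻¹).aestronglyMeasurable ?_
  filter_upwards [ae_restrict_mem measurableSet_Ioi] with x (hx : 0 < x)
  rw [norm_inv, Real.norm_of_nonneg (by positivity)]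
  exact inv_le_one_of_one_le₀ (by linarith)

theorem setIntegral_pos_of_forall_pos {ι : Type*} [MeasurableSpace ι] {μ : Measure ι}
    {s : Set ι} {f : ι → ℝ} (hs : MeasurableSet s) (hμs : μ s ≠ 0) (hf : ∀ x ∈ s, 0 < f x)
    (hfi : IntegrableOn f s μ) : 0 < ∫ x in s, f x ∂μ := by
  have hsupp : Function.support f ∩ s = s := inter_eq_right.mpr fun x hx ↦ (hf x hx).ne'
  rwa [setIntegral_pos_iff_support_of_nonneg_ae
    ((ae_restrict_iff' hs).mpr (.of_forall fun x hx ↦ (hf x hx).le)) hfi, hsupp, pos_iff_ne_zero]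

theorem integrableOn_rpow_mul_exp_neg_mul_rpow_div_one_add {s c t : ℝ} (hs : -1 < s)
    (hc : 0 < c) (ht : 0 < t) :
    IntegrableOn (fun x : ℝ ↦ x ^ s * exp (-(t * x ^ c)) / (1 + x)) (Ioi 0) := by
  simp_rw [← neg_mul]
  exact IntegrableOn.div_one_add_Ioi (integrableOn_rpow_mul_exp_neg_mul_rpow hs hc ht)

theorem integrableOn_exp_neg_mul_rpow_div_one_add {c t : ℝ} (hc : 0 < c) (ht : 0 < t) :
    IntegrableOn (fun x : ℝ ↦ exp (-(t * x ^ c)) / (1 + x)) (Ioi 0) := by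
  simpa using integrableOn_rpow_mul_exp_neg_mul_rpow_div_one_add (s := 0) (by norm_num) hc ht

theorem integral_exp_div_mul_integral_rpow_mul_exp_div_le {c t t' : ℝ} (hc : 0 < c)
    (ht : 0 < t) (htt' : t ≤ t') :
    (∫ x in Ioi 0, exp (-(t * x ^ c)) / (1 + x)) *
        ∫ x in Ioi 0, x ^ c * exp (-(t' * x ^ c)) / (1 + x) ≤
      (∫ x in Ioi 0, exp (-(t' * x ^ c)) / (1 + x)) *
        ∫ x in Ioi 0, x ^ c * exp (-(t * x ^ c)) / (1 + x) := by
  have ht' : 0 < t' := ht.trans_le htt'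
  have hexp (x : ℝ) : exp (-(t * x ^ c)) * exp (-((t' - t) * x ^ c)) = exp (-(t' * x ^ c)) := by
    rw [← exp_add]; ring_nf
  have hanti : Antivary (fun x : ℝ ↦ x ^ c) (fun x ↦ exp (-((t' - t) * x ^ c))) :=
    ((monovary_self fun x : ℝ ↦ x ^ c).comp_antitone_left (f' := fun u ↦ exp (-((t' - t) * u)))
      fun u v huv ↦ exp_le_exp.mpr (by nlinarith)).symm
  have hw : 0 ≤ᵐ[volume.restrict (Ioi 0)] fun x : ℝ ↦ exp (-(t * x ^ c)) / (1 + x) := by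
    filter_upwards [ae_restrict_mem measurableSet_Ioi] with x (hx : 0 < x)
    positivity
  have hwf : (fun x : ℝ ↦ exp (-(t * x ^ c)) / (1 + x) * x ^ c) =
      fun x ↦ x ^ c * exp (-(t * x ^ c)) / (1 + x) := by
    funext x; ring
  have hwg : (fun x : ℝ ↦ exp (-(t * x ^ c)) / (1 + x) * exp (-((t' - t) * x ^ c))) =
      fun x ↦ exp (-(t' * x ^ c)) / (1 + x) := by
    funext x; rw [← hexp]; ring
  have hwfg : (fun x : ℝ ↦ exp (-(t * x ^ c)) / (1 + x) * x ^ c * exp (-((t' - t) * x ^ c))) =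
      fun x ↦ x ^ c * exp (-(t' * x ^ c)) / (1 + x) := by
    funext x; rw [← hexp]; ring
  have key := hanti.integral_mul_integral_mul_mul_le hw
    (integrableOn_exp_neg_mul_rpow_div_one_add hc ht)
    (hwf ▸ integrableOn_rpow_mul_exp_neg_mul_rpow_div_one_add (by linarith) hc ht)
    (hwg ▸ integrableOn_exp_neg_mul_rpow_div_one_add hc ht')
    (hwfg ▸ integrableOn_rpow_mul_exp_neg_mul_rpow_div_one_add (by linarith) hc ht')
  rw [hwf, hwg, hwfg] at key
  linarith

theorem f_monotone_in_s2 (α s₁ : ℝ) (hα : 2 < α) (hs₁ : 0 < s₁) :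
    MonotoneOn (fun s₂ : ℝ =>
      (∫ x in Set.Ioi (0 : ℝ), Real.exp (-((s₁ + s₂) * x ^ (2 / α))) / (1 + x)) /
      (s₁ * ∫ x in Set.Ioi (0 : ℝ),
        x ^ (2 / α) * Real.exp (-((s₁ + s₂) * x ^ (2 / α))) / (1 + x)))
      (Set.Ioi 0) := by
  intro a (ha : 0 < a) b _ hab
  have hc : 0 < 2 / α := div_pos two_pos (by linarith)
  have hD (t : ℝ) (ht : 0 < t) :
      0 < ∫ x in Ioi 0, x ^ (2 / α) * exp (-(t * x ^ (2 / α))) / (1 + x) :=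
    setIntegral_pos_of_forall_pos measurableSet_Ioi (by simp) (fun x (hx : 0 < x) ↦ by positivity)
      (integrableOn_rpow_mul_exp_neg_mul_rpow_div_one_add (by linarith) hc ht)
  simp only [div_mul_eq_div_div_swap]
  gcongr ?_ / s₁
  rw [div_le_div_iff₀ (hD _ (by linarith)) (hD _ (by linarith))]
  exact integral_exp_div_mul_integral_rpow_mul_exp_div_le hc (by linarith : 0 < s₁ + a)
    (by linarith)
end

section
/- For α > 2, the function s ↦ f(s,s) = (∫₀^∞ e^{−2s x^{2/α}}/(1+x) dx) / (s·∫₀^∞ x^{2/α} e^{−2s x^{2/α}}/(1+x) dx) is monotonically decreasing on (0,∞). -/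
/-!
Substituting `x ↦ s ^ (α / 2) * x` and writing `q = 2 / α`, `c = s ^ (α / 2)`, the function becomes
`(∫ g_c) / (∫ u ^ q g_c)` with `g_c u = exp (-2 u ^ q) / (c + u)`. For `c₁ ≤ c₂` the ratio
`g_{c₂} / g_{c₁} = (c₁ + u) / (c₂ + u)` increases in `u`, so `g_{c₂}` favours large `u` and the
mean of the increasing function `u ^ q` under `g_c` increases with `c`; this is a Chebyshev-type
inequality, obtained by integrating `(g₁ x g₂ y - g₁ y g₂ x) (y ^ q - x ^ q) ≥ 0` over the quadrant.
-/

open Real MeasureTheory Set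

section

variable {X : Type*} [LinearOrder X] [MeasurableSpace X] {μ : Measure X} [SFinite μ] {s : Set X}

theorem setIntegral_mul_setIntegral_le_of_monotoneOn {w₁ w₂ φ : X → ℝ} (hs : MeasurableSet s)
    (hw₁ : IntegrableOn w₁ s μ) (hw₂ : IntegrableOn w₂ s μ)
    (hφw₁ : IntegrableOn (fun x ↦ φ x * w₁ x) s μ) (hφw₂ : IntegrableOn (fun x ↦ φ x * w₂ x) s μ)
    (hφ : MonotoneOn φ s) (hw : ∀ x ∈ s, ∀ y ∈ s, x ≤ y → w₁ y * w₂ x ≤ w₁ x * w₂ y) :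
    (∫ x in s, w₂ x ∂μ) * (∫ x in s, φ x * w₁ x ∂μ) ≤
      (∫ x in s, w₁ x ∂μ) * ∫ x in s, φ x * w₂ x ∂μ := by
  set ν := μ.restrict s
  -- The integrand is `(w₁ x * w₂ y - w₁ y * w₂ x) * (φ y - φ x)` expanded into product terms.
  have hF : 0 ≤ ∫ z, (w₁ z.1 * (φ z.2 * w₂ z.2) - (φ z.1 * w₁ z.1) * w₂ z.2
      - w₂ z.1 * (φ z.2 * w₁ z.2) + (φ z.1 * w₂ z.1) * w₁ z.2) ∂ν.prod ν := by
    refine integral_nonneg_of_ae ?_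
    rw [Measure.prod_restrict]
    filter_upwards [ae_restrict_mem (hs.prod hs)] with ⟨x, y⟩ ⟨hx, hy⟩
    have key : 0 ≤ (w₁ x * w₂ y - w₁ y * w₂ x) * (φ y - φ x) := by
      rcases le_total x y with hxy | hyx
      · exact mul_nonneg (by linarith [hw x hx y hy hxy]) (by linarith [hφ hx hy hxy])
      · exact mul_nonneg_of_nonpos_of_nonpos (by linarith [hw y hy x hx hyx])
          (by linarith [hφ hy hx hyx])
    simp only [Pi.zero_apply]
    linarith
  have h₁ := hw₁.mul_prod hφw₂
  have h₂ := hφw₁.mul_prod hw₂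
  have h₃ := hw₂.mul_prod hφw₁
  rw [integral_add ((h₁.sub' h₂).sub' h₃) (hφw₂.mul_prod hw₁), integral_sub (h₁.sub' h₂) h₃,
    integral_sub h₁ h₂, integral_prod_mul w₁ (fun x ↦ φ x * w₂ x),
    integral_prod_mul (fun x ↦ φ x * w₁ x) w₂, integral_prod_mul w₂ (fun x ↦ φ x * w₁ x),
    integral_prod_mul (fun x ↦ φ x * w₂ x) w₁] at hF
  linarith

end

/-- The paper's `g_s` in the variable `u = x ^ (α / 2)`: with `q = 2 / α` and `c = s ^ (α / 2)`,
`diagWeight q c u du = (α / 2) g_s(x) dx` and `u ^ q = x`. -/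
noncomputable def diagWeight (q c u : ℝ) : ℝ := exp (-(2 * u ^ q)) / (c + u)

section diagWeight

variable {p q c : ℝ}

theorem integrableOn_rpow_mul_diagWeight (hp : -1 < p) (hq : 0 < q) (hc : 0 < c) :
    IntegrableOn (fun u ↦ u ^ p * diagWeight q c u) (Ioi 0) := by
  have hdom := (integrableOn_rpow_mul_exp_neg_mul_rpow hp hq two_pos).const_mul c⁻¹
  refine hdom.mono' ?_ ?_
  · refine ContinuousOn.aestronglyMeasurable (fun u (hu : 0 < u) ↦ ?_) measurableSet_Ioi
    refine ContinuousAt.continuousWithinAt ?_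
    unfold diagWeight
    fun_prop (disch := first | positivity | exact Or.inl hu.ne')
  · filter_upwards [ae_restrict_mem measurableSet_Ioi] with u (hu : 0 < u)
    rw [Real.norm_of_nonneg (by unfold diagWeight; positivity), diagWeight, neg_mul,
      ← mul_div_assoc, ← div_eq_inv_mul]
    gcongr
    linarith

theorem integrableOn_diagWeight (hq : 0 < q) (hc : 0 < c) :
    IntegrableOn (diagWeight q c) (Ioi 0) := by
  simpa using integrableOn_rpow_mul_diagWeight neg_one_lt_zero hq hc

theorem setIntegral_rpow_mul_diagWeight_pos (hp : -1 < p) (hq : 0 < q) (hc : 0 < c) :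
    0 < ∫ u in Ioi 0, u ^ p * diagWeight q c u := by
  have hpos : ∀ u ∈ Ioi (0 : ℝ), 0 < u ^ p * diagWeight q c u := fun u (hu : 0 < u) ↦ by
    unfold diagWeight; positivity
  rw [setIntegral_pos_iff_support_of_nonneg_ae
    (ae_restrict_of_forall_mem measurableSet_Ioi fun u hu ↦ (hpos u hu).le)
    (integrableOn_rpow_mul_diagWeight hp hq hc),
    inter_eq_right.2 (show Ioi (0 : ℝ) ⊆ Function.support _ from fun u hu ↦ (hpos u hu).ne'),
    volume_Ioi]
  exact ENNReal.zero_lt_top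

theorem diagWeight_mul_diagWeight_le {c₁ c₂ x y : ℝ} (hc₁ : 0 < c₁) (hc : c₁ ≤ c₂) (hx : 0 ≤ x)
    (hxy : x ≤ y) :
    diagWeight q c₁ y * diagWeight q c₂ x ≤ diagWeight q c₁ x * diagWeight q c₂ y := by
  have hc₂ : 0 < c₂ := hc₁.trans_le hc
  have hy : 0 ≤ y := hx.trans hxy
  unfold diagWeight
  rw [div_mul_div_comm, div_mul_div_comm, mul_comm (exp (-(2 * y ^ q)))]
  exact div_le_div_of_nonneg_left (by positivity) (by positivity) (by nlinarith)

theorem antitoneOn_setIntegral_diagWeight_div (hq : 0 < q) :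
    AntitoneOn (fun c ↦ (∫ u in Ioi 0, diagWeight q c u) / ∫ u in Ioi 0, u ^ q * diagWeight q c u)
      (Ioi 0) := by
  intro c₁ (hc₁ : 0 < c₁) c₂ (hc₂ : 0 < c₂) hc
  have hq' : -1 < q := by linarith
  rw [div_le_div_iff₀ (setIntegral_rpow_mul_diagWeight_pos hq' hq hc₂)
    (setIntegral_rpow_mul_diagWeight_pos hq' hq hc₁)]
  exact setIntegral_mul_setIntegral_le_of_monotoneOn measurableSet_Ioi
    (integrableOn_diagWeight hq hc₁) (integrableOn_diagWeight hq hc₂)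
    (integrableOn_rpow_mul_diagWeight hq' hq hc₁) (integrableOn_rpow_mul_diagWeight hq' hq hc₂)
    (fun x (hx : 0 < x) y _ hxy ↦ rpow_le_rpow hx.le hxy hq.le)
    (fun x (hx : 0 < x) y _ hxy ↦ diagWeight_mul_diagWeight_le hc₁ hc hx.le hxy)

theorem setIntegral_comp_mul_div_one_add (h : ℝ → ℝ) (hc : 0 < c) :
    ∫ x in Ioi 0, h (c * x) / (1 + x) = ∫ u in Ioi 0, h u / (c + u) := by
  have hsubst := integral_comp_mul_left_Ioi' (fun u ↦ h u / (c + u)) 0 hc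
  rw [mul_zero, smul_eq_mul, ← integral_const_mul] at hsubst
  rw [← hsubst]
  congr 1 with x
  rw [mul_div_assoc', ← mul_one_add, mul_div_mul_left _ _ hc.ne']

theorem setIntegral_exp_div_one_add_eq (hc : 0 < c) :
    ∫ x in Ioi 0, exp (-(2 * c ^ q * x ^ q)) / (1 + x) = ∫ u in Ioi 0, diagWeight q c u := by
  unfold diagWeight
  rw [← setIntegral_comp_mul_div_one_add (fun u ↦ exp (-(2 * u ^ q))) hc]
  refine setIntegral_congr_fun measurableSet_Ioi fun x (hx : 0 < x) ↦ ?_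
  rw [mul_rpow hc.le hx.le, mul_assoc]

theorem mul_setIntegral_rpow_mul_exp_div_one_add_eq (hc : 0 < c) :
    c ^ q * ∫ x in Ioi 0, x ^ q * exp (-(2 * c ^ q * x ^ q)) / (1 + x) =
      ∫ u in Ioi 0, u ^ q * diagWeight q c u := by
  simp_rw [diagWeight, ← mul_div_assoc]
  rw [← setIntegral_comp_mul_div_one_add (fun u ↦ u ^ q * exp (-(2 * u ^ q))) hc,
    ← integral_const_mul]
  refine setIntegral_congr_fun measurableSet_Ioi fun x (hx : 0 < x) ↦ ?_
  rw [mul_rpow hc.le hx.le]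
  ring_nf

end diagWeight

theorem f_diag_antitone (α : ℝ) (hα : 2 < α) :
    AntitoneOn (fun s : ℝ =>
      (∫ x in Set.Ioi (0 : ℝ), Real.exp (-(2 * s * x ^ (2 / α))) / (1 + x)) /
      (s * ∫ x in Set.Ioi (0 : ℝ),
        x ^ (2 / α) * Real.exp (-(2 * s * x ^ (2 / α))) / (1 + x)))
      (Set.Ioi 0) := by
  have hq : 0 < 2 / α := by positivity
  have h_eq_rpow : ∀ s ∈ Ioi (0 : ℝ), ∃ c, 0 < c ∧ c ^ (2 / α) = s := fun s (hs : 0 < s) ↦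
    ⟨s ^ (2 / α)⁻¹, by positivity, rpow_inv_rpow hs.le hq.ne'⟩
  intro s₁ hs₁ s₂ hs₂ hs
  obtain ⟨c₁, hc₁, rfl⟩ := h_eq_rpow s₁ hs₁
  obtain ⟨c₂, hc₂, rfl⟩ := h_eq_rpow s₂ hs₂
  dsimp only
  rw [setIntegral_exp_div_one_add_eq hc₁, setIntegral_exp_div_one_add_eq hc₂,
    mul_setIntegral_rpow_mul_exp_div_one_add_eq hc₁,
    mul_setIntegral_rpow_mul_exp_div_one_add_eq hc₂]
  exact antitoneOn_setIntegral_diagWeight_div hq hc₁ hc₂ ((rpow_le_rpow_iff hc₁.le hc₂.le hq).1 hs)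
end

section
/- For α > 2 and fixed Λⱼ ≥ 0, the function Λᵢ ↦ Λᵢ·∫₀^∞ e^{−(Λᵢ+Λⱼ)x^{2/α}}/(1+x) dx on (0,∞) is smooth and has a unique global maximum, characterized by f(Λᵢ, Λⱼ) = 1 where f(s₁,s₂) = (∫₀^∞ e^{−(s₁+s₂)x^{2/α}}/(1+x)dx)/(s₁∫₀^∞ x^{2/α}e^{−(s₁+s₂)x^{2/α}}/(1+x)dx). -/
set_option maxHeartbeats 1000000
open Real MeasureTheory Set Filter Topology

namespace VRmax

lemma contOn_pow_exp (c q s : ℝ) :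
    ContinuousOn (fun x : ℝ => x ^ q * Real.exp (-(s * x ^ c))) (Ioi 0) := by
  apply ContinuousOn.mul
  · exact fun x hx => (Real.continuousAt_rpow_const x q (Or.inl (ne_of_gt hx))).continuousWithinAt
  · refine Real.continuous_exp.comp_continuousOn ?_
    refine ContinuousOn.neg (continuousOn_const.mul ?_)
    exact fun x hx => (Real.continuousAt_rpow_const x c (Or.inl (ne_of_gt hx))).continuousWithinAt

lemma contOn_K (c q s : ℝ) :
    ContinuousOn (fun x : ℝ => x ^ q * Real.exp (-(s * x ^ c)) / (1 + x)) (Ioi 0) := by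
  refine (contOn_pow_exp c q s).div (continuousOn_const.add continuousOn_id) ?_
  intro x hx
  have hx0 : (0:ℝ) < x := hx
  positivity

lemma contOn_Q (c q s : ℝ) :
    ContinuousOn (fun x : ℝ => x ^ q * Real.exp (-(s * x ^ c)) / (1 + x) ^ 2) (Ioi 0) := by
  refine (contOn_pow_exp c q s).div ((continuousOn_const.add continuousOn_id).pow 2) ?_
  intro x hx
  have hx0 : (0:ℝ) < x := hx
  positivity

lemma integrable_base {c q s : ℝ} (hc : 0 < c) (hq : -1 < q) (hs : 0 < s) :
    IntegrableOn (fun x : ℝ => x ^ q * Real.exp (-(s * x ^ c))) (Ioi 0) := by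
  have h1 : IntegrableOn (fun u : ℝ => u ^ ((q + 1) / c - 1) * Real.exp (-(s * u))) (Ioi 0) := by
    have h2 : IntegrableOn (fun u : ℝ => u ^ ((q + 1) / c - 1) * Real.exp (-s * u ^ (1:ℝ)))
        (Ioi 0) := integrableOn_rpow_mul_exp_neg_mul_rpow
      (by have : 0 < (q+1)/c := div_pos (by linarith) hc; linarith) zero_lt_one hs
    refine h2.congr_fun (fun x hx => ?_) measurableSet_Ioi
    simp only [Real.rpow_one, neg_mul]
  have h3 := (integrableOn_Ioi_comp_rpow_iff'
    (fun u : ℝ => u ^ ((q + 1) / c - 1) * Real.exp (-(s * u))) (ne_of_gt hc)).2 h1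
  refine h3.congr_fun (fun x hx => ?_) measurableSet_Ioi
  have hx0 : (0:ℝ) < x := hx
  simp only [smul_eq_mul]
  rw [← Real.rpow_mul hx0.le, ← mul_assoc, ← Real.rpow_add hx0]
  congr 2
  field_simp
  ring

/-- the first-kind integrand, with weight `1/(1+x)` -/
noncomputable def K (c q s : ℝ) : ℝ :=
  ∫ x in Ioi (0:ℝ), x ^ q * Real.exp (-(s * x ^ c)) / (1 + x)

/-- the second-kind integrand, with weight `1/(1+x)^2` -/
noncomputable def Q (c q s : ℝ) : ℝ :=
  ∫ x in Ioi (0:ℝ), x ^ q * Real.exp (-(s * x ^ c)) / (1 + x) ^ 2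

lemma integrable_K {c q s : ℝ} (hc : 0 < c) (hq : -1 < q) (hs : 0 < s) :
    IntegrableOn (fun x : ℝ => x ^ q * Real.exp (-(s * x ^ c)) / (1 + x)) (Ioi 0) := by
  refine Integrable.mono (integrable_base hc hq hs)
    ((contOn_K c q s).aestronglyMeasurable measurableSet_Ioi) ?_
  rw [ae_restrict_iff' measurableSet_Ioi]
  filter_upwards with x hx
  have hx0 : (0:ℝ) < x := hx
  have h1 : (0:ℝ) < 1 + x := by linarith
  have hnum : 0 ≤ x ^ q * Real.exp (-(s * x ^ c)) := by positivity
  rw [Real.norm_eq_abs, Real.norm_eq_abs, abs_of_nonneg (by positivity),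
    abs_of_nonneg hnum]
  exact div_le_self hnum (by linarith)

lemma integrable_Q {c q s : ℝ} (hc : 0 < c) (hq : -1 < q) (hs : 0 < s) :
    IntegrableOn (fun x : ℝ => x ^ q * Real.exp (-(s * x ^ c)) / (1 + x) ^ 2) (Ioi 0) := by
  refine Integrable.mono (integrable_base hc hq hs)
    ((contOn_Q c q s).aestronglyMeasurable measurableSet_Ioi) ?_
  rw [ae_restrict_iff' measurableSet_Ioi]
  filter_upwards with x hx
  have hx0 : (0:ℝ) < x := hx
  have h1 : (0:ℝ) < 1 + x := by linarith
  have hnum : 0 ≤ x ^ q * Real.exp (-(s * x ^ c)) := by positivity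
  rw [Real.norm_eq_abs, Real.norm_eq_abs, abs_of_nonneg (by positivity),
    abs_of_nonneg hnum]
  exact div_le_self hnum (by nlinarith)

lemma K_pos {c q s : ℝ} (hc : 0 < c) (hq : -1 < q) (hs : 0 < s) : 0 < K c q s := by
  rw [K]
  rw [setIntegral_pos_iff_support_of_nonneg_ae]
  · have hsub : Ioo (0:ℝ) 1 ⊆
        (Function.support fun x : ℝ => x ^ q * Real.exp (-(s * x ^ c)) / (1 + x)) ∩ Ioi 0 := by
      intro x hx
      have hx0 : (0:ℝ) < x := hx.1
      constructor
      · have : (0:ℝ) < x ^ q * Real.exp (-(s * x ^ c)) / (1 + x) := by positivity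
        exact ne_of_gt this
      · exact hx0
    calc (0:ENNReal) < volume (Ioo (0:ℝ) 1) := by simp
      _ ≤ _ := measure_mono hsub
  · rw [EventuallyLE, ae_restrict_iff' measurableSet_Ioi]
    filter_upwards with x hx
    have hx0 : (0:ℝ) < x := hx
    positivity
  · exact integrable_K hc hq hs

lemma Q_pos {c q s : ℝ} (hc : 0 < c) (hq : -1 < q) (hs : 0 < s) : 0 < Q c q s := by
  rw [Q]
  rw [setIntegral_pos_iff_support_of_nonneg_ae]
  · have hsub : Ioo (0:ℝ) 1 ⊆
        (Function.support fun x : ℝ => x ^ q * Real.exp (-(s * x ^ c)) / (1 + x) ^ 2) ∩ Ioi 0 := by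
      intro x hx
      have hx0 : (0:ℝ) < x := hx.1
      constructor
      · have : (0:ℝ) < x ^ q * Real.exp (-(s * x ^ c)) / (1 + x) ^ 2 := by positivity
        exact ne_of_gt this
      · exact hx0
    calc (0:ENNReal) < volume (Ioo (0:ℝ) 1) := by simp
      _ ≤ _ := measure_mono hsub
  · rw [EventuallyLE, ae_restrict_iff' measurableSet_Ioi]
    filter_upwards with x hx
    have hx0 : (0:ℝ) < x := hx
    positivity
  · exact integrable_Q hc hq hs

lemma K_antitone {c q s s' : ℝ} (hc : 0 < c) (hq : -1 < q) (hs : 0 < s) (hss' : s ≤ s') :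
    K c q s' ≤ K c q s := by
  have hs' : 0 < s' := lt_of_lt_of_le hs hss'
  refine setIntegral_mono_on (integrable_K hc hq hs') (integrable_K hc hq hs)
    measurableSet_Ioi (fun x hx => ?_)
  have hx0 : (0:ℝ) < x := hx
  have h1 : (0:ℝ) < 1 + x := by linarith
  have hxc : (0:ℝ) ≤ x ^ c := (Real.rpow_pos_of_pos hx0 c).le
  have hxq : (0:ℝ) ≤ x ^ q := (Real.rpow_pos_of_pos hx0 q).le
  gcongr

lemma hasDerivAt_K {c q s : ℝ} (hc : 0 < c) (hq : -1 < q) (hs : 0 < s) :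
    HasDerivAt (fun t => K c q t) (-K c (q + c) s) s := by
  have hqc : -1 < q + c := by linarith
  have hs2 : 0 < s / 2 := by linarith
  have h1 : ∀ᶠ t in nhds s, AEStronglyMeasurable
      (fun x : ℝ => x ^ q * Real.exp (-(t * x ^ c)) / (1 + x)) (volume.restrict (Ioi 0)) :=
    Eventually.of_forall fun t => (contOn_K c q t).aestronglyMeasurable measurableSet_Ioi
  have h2 : Integrable (fun x : ℝ => x ^ q * Real.exp (-(s * x ^ c)) / (1 + x))
      (volume.restrict (Ioi 0)) := integrable_K hc hq hs
  have h3 : AEStronglyMeasurable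
      (fun x : ℝ => -(x ^ (q + c) * Real.exp (-(s * x ^ c)) / (1 + x)))
      (volume.restrict (Ioi 0)) :=
    ((contOn_K c (q + c) s).aestronglyMeasurable measurableSet_Ioi).neg
  have h4 : ∀ᵐ x ∂(volume.restrict (Ioi (0:ℝ))), ∀ t ∈ Metric.ball s (s / 2),
      ‖-(x ^ (q + c) * Real.exp (-(t * x ^ c)) / (1 + x))‖
        ≤ x ^ (q + c) * Real.exp (-(s / 2 * x ^ c)) := by
    rw [ae_restrict_iff' measurableSet_Ioi]
    filter_upwards with x hx t ht
    have hx0 : (0:ℝ) < x := hx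
    have h1x : (0:ℝ) < 1 + x := by linarith
    have hxc : (0:ℝ) < x ^ c := Real.rpow_pos_of_pos hx0 c
    have hxqc : (0:ℝ) < x ^ (q + c) := Real.rpow_pos_of_pos hx0 _
    have ht2 : s / 2 ≤ t := by
      have hd := mem_ball_iff_norm.1 ht
      rw [Real.norm_eq_abs] at hd
      have h6 := abs_lt.1 hd
      linarith [h6.1]
    rw [norm_neg, Real.norm_eq_abs, abs_of_nonneg (by positivity)]
    calc x ^ (q + c) * Real.exp (-(t * x ^ c)) / (1 + x)
        ≤ x ^ (q + c) * Real.exp (-(t * x ^ c)) := div_le_self (by positivity) (by linarith)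
      _ ≤ x ^ (q + c) * Real.exp (-(s / 2 * x ^ c)) := by gcongr
  have h5 : Integrable (fun x : ℝ => x ^ (q + c) * Real.exp (-(s / 2 * x ^ c)))
      (volume.restrict (Ioi 0)) := integrable_base hc hqc hs2
  have h6 : ∀ᵐ x ∂(volume.restrict (Ioi (0:ℝ))), ∀ t ∈ Metric.ball s (s / 2),
      HasDerivAt (fun t' => x ^ q * Real.exp (-(t' * x ^ c)) / (1 + x))
        (-(x ^ (q + c) * Real.exp (-(t * x ^ c)) / (1 + x))) t := by
    rw [ae_restrict_iff' measurableSet_Ioi]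
    filter_upwards with x hx t ht
    have hx0 : (0:ℝ) < x := hx
    have ha : x ^ q * x ^ c = x ^ (q + c) := (Real.rpow_add hx0 q c).symm
    have hd0 := (((hasDerivAt_id t).mul_const (x ^ c)).neg).exp
    simp only [id_eq, one_mul] at hd0
    have hd : HasDerivAt (fun t' : ℝ => Real.exp (-(t' * x ^ c)))
        (Real.exp (-(t * x ^ c)) * -(x ^ c)) t := hd0
    have hd2 := (hd.const_mul (x ^ q)).div_const (1 + x)
    refine hd2.congr_deriv (Eq.symm ?_)
    rw [← ha]; ring
  have key := (hasDerivAt_integral_of_dominated_loc_of_deriv_le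
    (F := fun t (x : ℝ) => x ^ q * Real.exp (-(t * x ^ c)) / (1 + x))
    (F' := fun t (x : ℝ) => -(x ^ (q + c) * Real.exp (-(t * x ^ c)) / (1 + x)))
    (bound := fun x : ℝ => x ^ (q + c) * Real.exp (-(s / 2 * x ^ c)))
    (Metric.ball_mem_nhds s hs2) h1 h2 h3 h4 h5 h6).2
  have hneg : (∫ x in Ioi (0:ℝ), -(x ^ (q + c) * Real.exp (-(s * x ^ c)) / (1 + x)))
      = -K c (q + c) s := by
    rw [integral_neg]; rfl
  rw [hneg] at key
  exact key

/-- complex version of `K c 0` -/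
noncomputable def G (c : ℝ) (z : ℂ) : ℂ :=
  ∫ x in Ioi (0:ℝ), Complex.exp (-(z * ((x ^ c : ℝ) : ℂ))) / (((1 + x : ℝ) : ℂ))

lemma contOn_G_integrand (c : ℝ) (z : ℂ) :
    ContinuousOn (fun x : ℝ => Complex.exp (-(z * ((x ^ c : ℝ) : ℂ))) / (((1 + x : ℝ) : ℂ)))
      (Ioi 0) := by
  have hrpow : ContinuousOn (fun x : ℝ => ((x ^ c : ℝ) : ℂ)) (Ioi 0) :=
    Complex.continuous_ofReal.comp_continuousOn (fun x hx =>
      (Real.continuousAt_rpow_const x c (Or.inl (ne_of_gt hx))).continuousWithinAt)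
  refine ContinuousOn.div ?_ ?_ ?_
  · exact Complex.continuous_exp.comp_continuousOn ((continuousOn_const.mul hrpow).neg)
  · exact (Complex.continuous_ofReal.comp (continuous_const.add continuous_id)).continuousOn
  · intro x hx
    have hx0 : (0:ℝ) < x := hx
    simp only [ne_eq, Complex.ofReal_eq_zero]
    intro h; linarith

lemma integrable_G_integrand {c : ℝ} (hc : 0 < c) {z : ℂ} (hz : 0 < z.re) :
    IntegrableOn (fun x : ℝ => Complex.exp (-(z * ((x ^ c : ℝ) : ℂ))) / (((1 + x : ℝ) : ℂ)))
      (Ioi 0) := by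
  refine Integrable.mono' (g := fun x : ℝ => x ^ (0:ℝ) * Real.exp (-(z.re * x ^ c)))
    (integrable_base hc (by norm_num) hz)
    ((contOn_G_integrand c z).aestronglyMeasurable measurableSet_Ioi) ?_
  rw [ae_restrict_iff' measurableSet_Ioi]
  filter_upwards with x hx
  have hx0 : (0:ℝ) < x := hx
  have h1x : (0:ℝ) < 1 + x := by linarith
  have hre : (-(z * ((x ^ c : ℝ) : ℂ))).re = -(z.re * x ^ c) := by simp [Complex.mul_re]
  rw [norm_div, Complex.norm_exp, hre, Complex.norm_real,
    Real.norm_eq_abs, abs_of_pos h1x, Real.rpow_zero, one_mul]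
  exact div_le_self (Real.exp_nonneg _) (by linarith)

lemma diffOn_G {c : ℝ} (hc : 0 < c) : DifferentiableOn ℂ (G c) {z : ℂ | 0 < z.re} := by
  intro z₀ hz₀
  have hz₀' : 0 < z₀.re := hz₀
  have hε : 0 < z₀.re / 2 := by linarith
  have hcm1 : (-1:ℝ) < c := by linarith
  have h1 : ∀ᶠ z in nhds z₀, AEStronglyMeasurable
      (fun x : ℝ => Complex.exp (-(z * ((x ^ c : ℝ) : ℂ))) / (((1 + x : ℝ) : ℂ)))
      (volume.restrict (Ioi 0)) :=
    Eventually.of_forall fun z => (contOn_G_integrand c z).aestronglyMeasurable measurableSet_Ioi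
  have h2 := integrable_G_integrand hc hz₀'
  have hrpowC : ContinuousOn (fun x : ℝ => ((x ^ c : ℝ) : ℂ)) (Ioi 0) :=
    Complex.continuous_ofReal.comp_continuousOn (fun x hx =>
      (Real.continuousAt_rpow_const x c (Or.inl (ne_of_gt hx))).continuousWithinAt)
  have hdenC : Continuous (fun x : ℝ => ((1 + x : ℝ) : ℂ)) :=
    Complex.continuous_ofReal.comp (continuous_const.add continuous_id)
  have hne' : ∀ x ∈ Ioi (0:ℝ), ((1 + x : ℝ) : ℂ) ≠ 0 := by
    intro x hx
    have hx0 : (0:ℝ) < x := hx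
    simp only [ne_eq, Complex.ofReal_eq_zero]
    intro h; linarith
  have hexpC : ContinuousOn (fun x : ℝ => Complex.exp (-(z₀ * ((x ^ c : ℝ) : ℂ)))) (Ioi 0) :=
    Complex.continuous_exp.comp_continuousOn ((continuousOn_const.mul hrpowC).neg)
  have h3 : AEStronglyMeasurable
      (fun x : ℝ => -(((x ^ c : ℝ) : ℂ) * Complex.exp (-(z₀ * ((x ^ c : ℝ) : ℂ)))
        / (((1 + x : ℝ) : ℂ)))) (volume.restrict (Ioi 0)) :=
    (((hrpowC.mul hexpC).div hdenC.continuousOn hne').neg).aestronglyMeasurable measurableSet_Ioi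
  have h4 : ∀ᵐ x ∂(volume.restrict (Ioi (0:ℝ))), ∀ z ∈ Metric.ball z₀ (z₀.re / 2),
      ‖-(((x ^ c : ℝ) : ℂ) * Complex.exp (-(z * ((x ^ c : ℝ) : ℂ))) / (((1 + x : ℝ) : ℂ)))‖
        ≤ x ^ c * Real.exp (-(z₀.re / 2 * x ^ c)) := by
    rw [ae_restrict_iff' measurableSet_Ioi]
    filter_upwards with x hx z hz
    have hx0 : (0:ℝ) < x := hx
    have h1x : (0:ℝ) < 1 + x := by linarith
    have hxc : (0:ℝ) < x ^ c := Real.rpow_pos_of_pos hx0 c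
    have hzre : z₀.re / 2 ≤ z.re := by
      have hd := mem_ball_iff_norm.1 hz
      have h5 := Complex.abs_re_le_norm (z - z₀)
      rw [Complex.sub_re] at h5
      have h6 := (abs_le.1 h5).1
      linarith
    have hre : (-(z * ((x ^ c : ℝ) : ℂ))).re = -(z.re * x ^ c) := by simp [Complex.mul_re]
    rw [norm_neg, norm_div, norm_mul, Complex.norm_exp, hre,
      Complex.norm_real, Real.norm_eq_abs, Complex.norm_real, Real.norm_eq_abs,
      abs_of_pos hxc, abs_of_pos h1x]
    calc x ^ c * Real.exp (-(z.re * x ^ c)) / (1 + x)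
        ≤ x ^ c * Real.exp (-(z.re * x ^ c)) := div_le_self (by positivity) (by linarith)
      _ ≤ x ^ c * Real.exp (-(z₀.re / 2 * x ^ c)) := by gcongr
  have h5 : Integrable (fun x : ℝ => x ^ c * Real.exp (-(z₀.re / 2 * x ^ c)))
      (volume.restrict (Ioi 0)) := integrable_base hc hcm1 hε
  have h6 : ∀ᵐ x ∂(volume.restrict (Ioi (0:ℝ))), ∀ z ∈ Metric.ball z₀ (z₀.re / 2),
      HasDerivAt (fun z' : ℂ => Complex.exp (-(z' * ((x ^ c : ℝ) : ℂ))) / (((1 + x : ℝ) : ℂ)))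
        (-(((x ^ c : ℝ) : ℂ) * Complex.exp (-(z * ((x ^ c : ℝ) : ℂ)))
          / (((1 + x : ℝ) : ℂ)))) z := by
    rw [ae_restrict_iff' measurableSet_Ioi]
    filter_upwards with x hx z hz
    have hd0 := (((hasDerivAt_id z).mul_const (((x ^ c : ℝ) : ℂ))).neg).cexp
    simp only [id_eq, one_mul] at hd0
    have hd : HasDerivAt (fun z' : ℂ => Complex.exp (-(z' * ((x ^ c : ℝ) : ℂ))))
        (Complex.exp (-(z * ((x ^ c : ℝ) : ℂ))) * -(((x ^ c : ℝ) : ℂ))) z := hd0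
    have hd2 := hd.div_const (((1 + x : ℝ) : ℂ))
    refine hd2.congr_deriv (Eq.symm ?_)
    ring
  have key := (hasDerivAt_integral_of_dominated_loc_of_deriv_le
    (F := fun z (x : ℝ) => Complex.exp (-(z * ((x ^ c : ℝ) : ℂ))) / (((1 + x : ℝ) : ℂ)))
    (F' := fun z (x : ℝ) => -(((x ^ c : ℝ) : ℂ) * Complex.exp (-(z * ((x ^ c : ℝ) : ℂ)))
      / (((1 + x : ℝ) : ℂ))))
    (bound := fun x : ℝ => x ^ c * Real.exp (-(z₀.re / 2 * x ^ c)))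
    (Metric.ball_mem_nhds z₀ hε) h1 h2 h3 h4 h5 h6).2
  exact key.differentiableAt.differentiableWithinAt

lemma G_real (c : ℝ) (s : ℝ) : G c (s : ℂ) = ((K c 0 s : ℝ) : ℂ) := by
  have h1 : K c 0 s = ∫ x in Ioi (0: ℝ), Real.exp (-(s * x ^ c)) / (1 + x) := by
    rw [K]
    simp only [Real.rpow_zero, one_mul]
  have h2 : (∫ x in Ioi (0:ℝ), ((Real.exp (-(s * x ^ c)) / (1 + x) : ℝ) : ℂ))
      = (((∫ x in Ioi (0:ℝ), Real.exp (-(s * x ^ c)) / (1 + x) : ℝ)) : ℂ) := integral_ofReal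
  rw [h1, G, ← h2]
  refine setIntegral_congr_fun measurableSet_Ioi (fun x hx => ?_)
  rw [Complex.ofReal_div, Complex.ofReal_exp]
  congr 2
  push_cast
  ring

lemma tendsto_exp_neg_rpow {c s : ℝ} (hc : 0 < c) (hs : 0 < s) :
    Tendsto (fun x : ℝ => Real.exp (-(s * x ^ c))) atTop (nhds 0) := by
  have h1 : Tendsto (fun x : ℝ => s * x ^ c) atTop atTop :=
    (tendsto_rpow_atTop hc).const_mul_atTop hs
  exact Real.tendsto_exp_neg_atTop_nhds_zero.comp h1

lemma tendsto_rpow_mul_exp_neg_rpow {c s : ℝ} (hc : 0 < c) (hs : 0 < s) :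
    Tendsto (fun x : ℝ => x ^ c * Real.exp (-(s * x ^ c))) atTop (nhds 0) := by
  have h0 : Tendsto (fun v : ℝ => v * Real.exp (-v)) atTop (nhds 0) := by
    have := Real.tendsto_pow_mul_exp_neg_atTop_nhds_zero 1
    simpa using this
  have h2 : Tendsto (fun u : ℝ => u * Real.exp (-(s * u))) atTop (nhds 0) := by
    have h1 : Tendsto (fun u : ℝ => s * u) atTop atTop :=
      tendsto_id.const_mul_atTop hs
    have h3 := (h0.comp h1).const_mul (1 / s)
    rw [mul_zero] at h3
    refine h3.congr (fun u => ?_)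
    simp only [Function.comp_apply]
    field_simp
  exact h2.comp (tendsto_rpow_atTop hc)

lemma hasDerivAt_exp_rpow {c s x : ℝ} (hx : 0 < x) :
    HasDerivAt (fun y : ℝ => Real.exp (-(s * y ^ c)))
      (Real.exp (-(s * x ^ c)) * -(s * (c * x ^ (c - 1)))) x := by
  have h1 : HasDerivAt (fun y : ℝ => y ^ c) (c * x ^ (c - 1)) x :=
    Real.hasDerivAt_rpow_const (Or.inl (ne_of_gt hx))
  exact ((h1.const_mul s).neg).exp

/-- first integration by parts identity: `s * K c c s = c⁻¹ * Q c 0 s` -/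
lemma ibp1 {c s : ℝ} (hc : 0 < c) (hc1 : c < 1) (hs : 0 < s) :
    s * K c c s = c⁻¹ * Q c 0 s := by
  have hcm1 : (-1:ℝ) < c := by linarith
  set g : ℝ → ℝ := fun x => Real.exp (-(s * x ^ c)) * (x / (1 + x)) with hg
  set d : ℝ → ℝ := fun x =>
    Real.exp (-(s * x ^ c)) / (1 + x) ^ 2 - s * c * (x ^ c * Real.exp (-(s * x ^ c)) / (1 + x))
    with hd
  have hIQ : IntegrableOn (fun x : ℝ => Real.exp (-(s * x ^ c)) / (1 + x) ^ 2) (Ioi 0) :=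
    (integrable_Q hc (by norm_num) hs (q := 0)).congr_fun
      (fun x hx => by simp only [Real.rpow_zero, one_mul]) measurableSet_Ioi
  have hIK : IntegrableOn (fun x : ℝ => x ^ c * Real.exp (-(s * x ^ c)) / (1 + x)) (Ioi 0) :=
    integrable_K hc hcm1 hs
  have hdint : IntegrableOn d (Ioi 0) := hIQ.sub (hIK.const_mul (s * c))
  have hderiv : ∀ x ∈ Ioi (0:ℝ), HasDerivAt g (d x) x := by
    intro x hx
    have hx0 : (0:ℝ) < x := hx
    have h1x : (0:ℝ) < 1 + x := by linarith
    have hfrac : HasDerivAt (fun y : ℝ => y / (1 + y))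
        ((1 * (1 + x) - x * (0 + 1)) / (1 + x) ^ 2) x :=
      (hasDerivAt_id x).div ((hasDerivAt_const x 1).add (hasDerivAt_id x)) (ne_of_gt h1x)
    have hmul := (hasDerivAt_exp_rpow (c := c) (s := s) hx0).mul hfrac
    refine hmul.congr_deriv (Eq.symm ?_)
    rw [hd]
    simp only
    rw [Real.rpow_sub hx0, Real.rpow_one]
    field_simp
    ring
  have hcont : ContinuousWithinAt g (Ici 0) 0 := by
    apply ContinuousAt.continuousWithinAt
    have h1 : ContinuousAt (fun y : ℝ => y ^ c) 0 :=
      Real.continuousAt_rpow_const 0 c (Or.inr hc.le)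
    have h2 : ContinuousAt (fun y : ℝ => Real.exp (-(s * y ^ c))) 0 :=
      Real.continuous_exp.continuousAt.comp ((h1.const_mul s).neg)
    exact h2.mul ((continuousAt_id.div
      (continuousAt_const.add continuousAt_id) (by norm_num)))
  have htend : Tendsto g atTop (nhds 0) := by
    apply squeeze_zero' (g := fun x : ℝ => Real.exp (-(s * x ^ c)))
    · filter_upwards [eventually_gt_atTop (0:ℝ)] with x hx
      have h1x : (0:ℝ) < 1 + x := by linarith
      have : 0 ≤ x / (1 + x) := by positivity
      positivity
    · filter_upwards [eventually_gt_atTop (0:ℝ)] with x hx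
      have h1x : (0:ℝ) < 1 + x := by linarith
      rw [hg]
      simp only
      nth_rewrite 2 [← mul_one (Real.exp (-(s * x ^ c)))]
      gcongr
      all_goals first
        | exact Real.exp_nonneg _
        | (rw [div_le_one h1x]; linarith)
    · exact tendsto_exp_neg_rpow hc hs
  have hint := integral_Ioi_of_hasDerivAt_of_tendsto hcont hderiv hdint htend
  have hg0 : g 0 = 0 := by
    rw [hg]; simp
  rw [hg0, sub_zero] at hint
  have hsplit : (∫ x in Ioi (0:ℝ), d x)
      = Q c 0 s - s * c * K c c s := by
    rw [hd]
    rw [integral_sub hIQ (hIK.const_mul (s * c))]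
    rw [integral_const_mul]
    congr 1
    rw [Q]
    refine setIntegral_congr_fun measurableSet_Ioi (fun x hx => ?_) |>.symm
    rw [Real.rpow_zero, one_mul]
  rw [hsplit] at hint
  have hc0 : c ≠ 0 := ne_of_gt hc
  rw [eq_comm, inv_mul_eq_div, div_eq_iff hc0]
  linear_combination hint

/-- second integration by parts identity -/
lemma ibp2 {c s : ℝ} (hc : 0 < c) (hc1 : c < 1) (hs : 0 < s) :
    s * K c (c + c) s = K c c s + c⁻¹ * Q c c s := by
  have hcm1 : (-1:ℝ) < c := by linarith
  have hcc : (-1:ℝ) < c + c := by linarith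
  set g : ℝ → ℝ := fun x => Real.exp (-(s * x ^ c)) * (x ^ (c + 1) / (1 + x)) with hg
  set d : ℝ → ℝ := fun x =>
    c * (x ^ c * Real.exp (-(s * x ^ c)) / (1 + x))
      + x ^ c * Real.exp (-(s * x ^ c)) / (1 + x) ^ 2
      - s * c * (x ^ (c + c) * Real.exp (-(s * x ^ c)) / (1 + x)) with hd
  have hIKc : IntegrableOn (fun x : ℝ => x ^ c * Real.exp (-(s * x ^ c)) / (1 + x)) (Ioi 0) :=
    integrable_K hc hcm1 hs
  have hIQc : IntegrableOn (fun x : ℝ => x ^ c * Real.exp (-(s * x ^ c)) / (1 + x) ^ 2) (Ioi 0) :=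
    integrable_Q hc hcm1 hs
  have hIK2 : IntegrableOn (fun x : ℝ => x ^ (c + c) * Real.exp (-(s * x ^ c)) / (1 + x))
      (Ioi 0) := integrable_K hc hcc hs
  have hdint : IntegrableOn d (Ioi 0) :=
    ((hIKc.const_mul c).add hIQc).sub (hIK2.const_mul (s * c))
  have hderiv : ∀ x ∈ Ioi (0:ℝ), HasDerivAt g (d x) x := by
    intro x hx
    have hx0 : (0:ℝ) < x := hx
    have h1x : (0:ℝ) < 1 + x := by linarith
    have hnum : HasDerivAt (fun y : ℝ => y ^ (c + 1)) ((c + 1) * x ^ (c + 1 - 1)) x :=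
      Real.hasDerivAt_rpow_const (Or.inl (ne_of_gt hx0))
    have hfrac : HasDerivAt (fun y : ℝ => y ^ (c + 1) / (1 + y))
        (((c + 1) * x ^ (c + 1 - 1) * (1 + x) - x ^ (c + 1) * (0 + 1)) / (1 + x) ^ 2) x :=
      hnum.div ((hasDerivAt_const x 1).add (hasDerivAt_id x)) (ne_of_gt h1x)
    have hmul := (hasDerivAt_exp_rpow (c := c) (s := s) hx0).mul hfrac
    refine hmul.congr_deriv (Eq.symm ?_)
    rw [hd]
    simp only
    have e1 : c + 1 - 1 = c := by ring
    rw [e1]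
    have e2 : x ^ (c + 1) = x ^ c * x := by rw [Real.rpow_add hx0, Real.rpow_one]
    have e3 : x ^ (c - 1) = x ^ c / x := by rw [Real.rpow_sub hx0, Real.rpow_one]
    have e4 : x ^ (c + c) = x ^ c * x ^ c := Real.rpow_add hx0 c c
    rw [e2, e3, e4]
    field_simp
    ring
  have hcont : ContinuousWithinAt g (Ici 0) 0 := by
    apply ContinuousAt.continuousWithinAt
    have h1 : ContinuousAt (fun y : ℝ => y ^ c) 0 :=
      Real.continuousAt_rpow_const 0 c (Or.inr hc.le)
    have h1' : ContinuousAt (fun y : ℝ => y ^ (c + 1)) 0 :=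
      Real.continuousAt_rpow_const 0 (c + 1) (Or.inr (by linarith))
    have h2 : ContinuousAt (fun y : ℝ => Real.exp (-(s * y ^ c))) 0 :=
      Real.continuous_exp.continuousAt.comp ((h1.const_mul s).neg)
    exact h2.mul (h1'.div (continuousAt_const.add continuousAt_id) (by norm_num))
  have htend : Tendsto g atTop (nhds 0) := by
    apply squeeze_zero' (g := fun x : ℝ => x ^ c * Real.exp (-(s * x ^ c)))
    · filter_upwards [eventually_gt_atTop (0:ℝ)] with x hx
      have h1x : (0:ℝ) < 1 + x := by linarith
      have h2 : (0:ℝ) < x ^ (c + 1) := Real.rpow_pos_of_pos hx _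
      positivity
    · filter_upwards [eventually_gt_atTop (0:ℝ)] with x hx
      have h1x : (0:ℝ) < 1 + x := by linarith
      rw [hg]
      simp only
      have e2 : x ^ (c + 1) = x ^ c * x := by rw [Real.rpow_add hx, Real.rpow_one]
      rw [e2]
      have hb : x / (1 + x) ≤ 1 := by rw [div_le_one h1x]; linarith
      have h3 : (0:ℝ) < x ^ c := Real.rpow_pos_of_pos hx _
      have heq : Real.exp (-(s * x ^ c)) * (x ^ c * x / (1 + x))
          = (x ^ c * Real.exp (-(s * x ^ c))) * (x / (1 + x)) := by ring
      rw [heq]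
      exact (mul_le_mul_of_nonneg_left hb (by positivity)).trans_eq (mul_one _)
    · exact tendsto_rpow_mul_exp_neg_rpow hc hs
  have hint := integral_Ioi_of_hasDerivAt_of_tendsto hcont hderiv hdint htend
  have hg0 : g 0 = 0 := by
    rw [hg]
    simp only
    rw [Real.zero_rpow (by positivity : c + 1 ≠ 0)]
    simp
  rw [hg0, sub_zero] at hint
  have hsplit : (∫ x in Ioi (0:ℝ), d x)
      = c * K c c s + Q c c s - s * c * K c (c + c) s := by
    have hAB : IntegrableOn (fun x : ℝ => c * (x ^ c * Real.exp (-(s * x ^ c)) / (1 + x))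
        + x ^ c * Real.exp (-(s * x ^ c)) / (1 + x) ^ 2) (Ioi 0) := by
      exact (hIKc.const_mul c).add hIQc
    simp only [hd]
    rw [integral_sub hAB (hIK2.const_mul (s * c))]
    rw [integral_add (hIKc.const_mul c) hIQc, integral_const_mul, integral_const_mul]
    rfl
  rw [hsplit] at hint
  have hc0 : c ≠ 0 := ne_of_gt hc
  have hci : c⁻¹ * c = 1 := inv_mul_cancel₀ hc0
  linear_combination (-c⁻¹) * hint + (K c c s - s * K c (c + c) s) * hci

lemma K0_split {c s : ℝ} (hc : 0 < c) (hs : 0 < s) :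
    K c 0 s = Q c 0 s + Q c 1 s := by
  rw [K, Q, Q, ← integral_add (integrable_Q hc (by norm_num) hs (q := 0))
    (integrable_Q hc (by norm_num) hs (q := 1))]
  refine setIntegral_congr_fun measurableSet_Ioi (fun x hx => ?_)
  have hx0 : (0:ℝ) < x := hx
  have h1x : (0:ℝ) < 1 + x := by linarith
  rw [Real.rpow_zero, Real.rpow_one]
  field_simp

lemma Q1_le {c s : ℝ} (hc : 0 < c) (hs : 0 < s) :
    Q c 1 s ≤ s ^ (-(2:ℝ) / c) * ((1 / c) * Real.Gamma (2 / c)) := by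
  have hval : ∫ x in Ioi (0:ℝ), x ^ (1:ℝ) * Real.exp (-s * x ^ c)
      = s ^ (-((1:ℝ) + 1) / c) * (1 / c) * Real.Gamma (((1:ℝ) + 1) / c) :=
    integral_rpow_mul_exp_neg_mul_rpow hc (by norm_num) hs
  have hle : Q c 1 s ≤ ∫ x in Ioi (0:ℝ), x ^ (1:ℝ) * Real.exp (-s * x ^ c) := by
    rw [Q]
    refine setIntegral_mono_on (integrable_Q hc (by norm_num) hs) ?_ measurableSet_Ioi
      (fun x hx => ?_)
    · refine (integrable_base hc (by norm_num) hs (q := 1)).congr_fun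
        (fun x hx => by rw [neg_mul]) measurableSet_Ioi
    · have hx0 : (0:ℝ) < x := hx
      have h1x : (0:ℝ) < 1 + x := by linarith
      rw [neg_mul]
      exact div_le_self (by positivity) (by nlinarith)
  calc Q c 1 s ≤ _ := hle
    _ = s ^ (-((1:ℝ) + 1) / c) * (1 / c) * Real.Gamma (((1:ℝ) + 1) / c) := hval
    _ = s ^ (-(2:ℝ) / c) * ((1 / c) * Real.Gamma (2 / c)) := by norm_num; ring

lemma Q0_lower {c s : ℝ} (hc : 0 < c) (hs1 : 1 ≤ s) :
    Real.exp (-1) / 4 * s ^ (-c⁻¹) ≤ Q c 0 s := by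
  have hs : (0:ℝ) < s := lt_of_lt_of_le one_pos hs1
  set t : ℝ := s ^ (-c⁻¹) with ht
  have ht0 : 0 < t := Real.rpow_pos_of_pos hs _
  have ht1 : t ≤ 1 :=
    Real.rpow_le_one_of_one_le_of_nonpos hs1 (neg_nonpos.mpr (inv_nonneg.mpr hc.le))
  have htc : s * t ^ c = 1 := by
    have h1 : t ^ c = s ^ (-c⁻¹ * c) := by rw [ht, ← Real.rpow_mul hs.le]
    have h2 : -c⁻¹ * c = -1 := by field_simp
    rw [h1, h2, Real.rpow_neg_one, mul_inv_cancel₀ (ne_of_gt hs)]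
  have hIf : IntegrableOn (fun x : ℝ => x ^ (0:ℝ) * Real.exp (-(s * x ^ c)) / (1 + x) ^ 2)
      (Ioc 0 t) := (integrable_Q hc (by norm_num) hs (q := 0)).mono_set Ioc_subset_Ioi_self
  have hconst : Real.exp (-1) / 4 * t
      ≤ ∫ x in Ioc (0:ℝ) t, x ^ (0:ℝ) * Real.exp (-(s * x ^ c)) / (1 + x) ^ 2 := by
    have hpt : ∀ x ∈ Ioc (0:ℝ) t,
        Real.exp (-1) / 4 ≤ x ^ (0:ℝ) * Real.exp (-(s * x ^ c)) / (1 + x) ^ 2 := by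
      intro x hx
      have hx0 : (0:ℝ) < x := hx.1
      have hxt : x ≤ t := hx.2
      rw [Real.rpow_zero, one_mul]
      have hxc : x ^ c ≤ t ^ c := Real.rpow_le_rpow hx0.le hxt hc.le
      have hsx : s * x ^ c ≤ 1 := by
        calc s * x ^ c ≤ s * t ^ c := by gcongr
          _ = 1 := htc
      have hexp : Real.exp (-1) ≤ Real.exp (-(s * x ^ c)) := by
        apply Real.exp_le_exp.2; linarith
      have hsq : (1 + x) ^ 2 ≤ 4 := by nlinarith
      exact div_le_div₀ (Real.exp_nonneg _) hexp (by positivity) hsq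
    have h := setIntegral_ge_of_const_le (μ := volume) measurableSet_Ioc
      measure_Ioc_lt_top.ne hpt hIf
    rw [Real.volume_real_Ioc, sub_zero, max_eq_left ht0.le, smul_eq_mul] at h
    linarith
  have hmono : (∫ x in Ioc (0:ℝ) t, x ^ (0:ℝ) * Real.exp (-(s * x ^ c)) / (1 + x) ^ 2)
      ≤ Q c 0 s := by
    rw [Q]
    refine setIntegral_mono_set (integrable_Q hc (by norm_num) hs (q := 0)) ?_
      (HasSubset.Subset.eventuallyLE Ioc_subset_Ioi_self)
    rw [EventuallyLE, ae_restrict_iff' measurableSet_Ioi]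
    filter_upwards with x hx
    have hx0 : (0:ℝ) < x := hx
    positivity
  linarith

lemma exists_big {c Λj : ℝ} (hc : 0 < c) (hc1 : c < 1) (hΛj : 0 ≤ Λj) :
    ∃ b : ℝ, 0 < b ∧ K c 0 (b + Λj) < b * K c c (b + Λj) := by
  have hδ : 0 < (1 - c) / (2 * c) := div_pos (by linarith) (by linarith)
  set δ : ℝ := (1 - c) / (2 * c) with hδdef
  have hC₂ : 0 < (1 / c) * Real.Gamma (2 / c) :=
    mul_pos (by positivity) (Real.Gamma_pos_of_pos (by positivity))
  set C₂ : ℝ := (1 / c) * Real.Gamma (2 / c) with hC₂def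
  have he4 : 0 < Real.exp (-1) / 4 := by positivity
  set e4 : ℝ := Real.exp (-1) / 4 with he4def
  have hθ : 0 < δ * e4 / (2 * C₂) := by positivity
  set θ : ℝ := δ * e4 / (2 * C₂) with hθdef
  set s : ℝ := max (max 1 (2 * Λj / (1 - c))) (θ ^ (-c)) with hsdef
  have hs1 : 1 ≤ s := le_trans (le_max_left _ _) (le_max_left _ _)
  have hs0 : 0 < s := lt_of_lt_of_le one_pos hs1
  have hsΛ : 2 * Λj / (1 - c) ≤ s := le_trans (le_max_right _ _) (le_max_left _ _)
  have hsθ : θ ^ (-c) ≤ s := le_max_right _ _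
  have hΛs : Λj ≤ s * (1 - c) / 2 := by
    have h := (div_le_iff₀ (by linarith : (0:ℝ) < 1 - c)).1 hsΛ
    linarith
  have hb : 0 < s - Λj := by nlinarith
  refine ⟨s - Λj, hb, ?_⟩
  rw [sub_add_cancel]
  -- the key estimates
  have hspos : 0 < s ^ (-c⁻¹) := Real.rpow_pos_of_pos hs0 _
  have hP : Q c 1 s ≤ C₂ * (s ^ (-c⁻¹) * s ^ (-c⁻¹)) := by
    have h1 := Q1_le (s := s) hc hs0
    have h2 : s ^ (-(2:ℝ) / c) = s ^ (-c⁻¹) * s ^ (-c⁻¹) := by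
      rw [← Real.rpow_add hs0]
      congr 1
      field_simp
      ring
    rw [h2] at h1
    calc Q c 1 s ≤ s ^ (-c⁻¹) * s ^ (-c⁻¹) * (1 / c * Real.Gamma (2 / c)) := h1
      _ = C₂ * (s ^ (-c⁻¹) * s ^ (-c⁻¹)) := by rw [hC₂def]; ring
  have hθs : s ^ (-c⁻¹) ≤ θ := by
    set S : ℝ := s ^ c⁻¹ with hSdef
    have hSpos : 0 < S := Real.rpow_pos_of_pos hs0 _
    have hθS : θ⁻¹ ≤ S := by
      have h3 : ((θ ^ (-c) : ℝ)) ^ (c⁻¹ : ℝ) = θ⁻¹ := by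
        rw [← Real.rpow_mul hθ.le]
        have : -c * c⁻¹ = -1 := by field_simp
        rw [this, Real.rpow_neg_one]
      calc θ⁻¹ = ((θ ^ (-c) : ℝ)) ^ (c⁻¹ : ℝ) := h3.symm
        _ ≤ S := Real.rpow_le_rpow (Real.rpow_pos_of_pos hθ _).le hsθ (by positivity)
    have h8 : (1:ℝ) ≤ θ * S := by
      calc (1:ℝ) = θ * θ⁻¹ := (mul_inv_cancel₀ (ne_of_gt hθ)).symm
        _ ≤ θ * S := by gcongr
    have h9 : S⁻¹ ≤ θ := by
      have h10 := mul_le_mul_of_nonneg_left h8 (inv_nonneg.mpr hSpos.le)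
      rw [mul_one] at h10
      calc S⁻¹ ≤ S⁻¹ * (θ * S) := h10
        _ = θ * (S⁻¹ * S) := by ring
        _ = θ := by rw [inv_mul_cancel₀ (ne_of_gt hSpos), mul_one]
    calc s ^ (-c⁻¹) = S⁻¹ := by rw [hSdef, Real.rpow_neg hs0.le]
      _ ≤ θ := h9
  have hQ0 : e4 * s ^ (-c⁻¹) ≤ Q c 0 s := Q0_lower hc hs1
  have hQ0pos : 0 < Q c 0 s := Q_pos hc (by norm_num) hs0
  have hPδ : Q c 1 s < δ * Q c 0 s := by
    have k1 : C₂ * (s ^ (-c⁻¹) * s ^ (-c⁻¹)) ≤ C₂ * (θ * s ^ (-c⁻¹)) := by gcongr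
    have k2 : C₂ * (θ * s ^ (-c⁻¹)) = δ * e4 / 2 * s ^ (-c⁻¹) := by
      rw [hθdef]
      field_simp
    have k3 : δ * e4 / 2 * s ^ (-c⁻¹) < δ * e4 * s ^ (-c⁻¹) := by
      have k5 : 0 < δ * e4 * s ^ (-c⁻¹) := by positivity
      have k6 : δ * e4 / 2 * s ^ (-c⁻¹) = δ * e4 * s ^ (-c⁻¹) / 2 := by ring
      rw [k6]
      linarith
    have k4 : δ * e4 * s ^ (-c⁻¹) ≤ δ * Q c 0 s := by
      have h := mul_le_mul_of_nonneg_left hQ0 hδ.le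
      calc δ * e4 * s ^ (-c⁻¹) = δ * (e4 * s ^ (-c⁻¹)) := by ring
        _ ≤ δ * Q c 0 s := h
    linarith
  have hbs : δ ≤ (s - Λj) / (c * s) - 1 := by
    have hbge : s * (1 + c) / 2 ≤ s - Λj := by linarith
    have hcs : (0:ℝ) < c * s := by positivity
    have h11 : s * (1 + c) / 2 / (c * s) ≤ (s - Λj) / (c * s) :=
      (div_le_div_iff_of_pos_right hcs).mpr hbge
    have h12 : s * (1 + c) / 2 / (c * s) = (1 + c) / (2 * c) := by
      field_simp
    rw [h12] at h11
    have h13 : δ = (1 + c) / (2 * c) - 1 := by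
      rw [hδdef]
      field_simp
      ring
    linarith
  have hK0 : K c 0 s = Q c 0 s + Q c 1 s := K0_split hc hs0
  have hKc : K c c s = c⁻¹ * Q c 0 s / s := by
    have h := ibp1 hc hc1 hs0
    rw [eq_div_iff (ne_of_gt hs0)]
    linear_combination h
  rw [hK0, hKc]
  have e3 : (s - Λj) * (c⁻¹ * Q c 0 s / s) = Q c 0 s + ((s - Λj) / (c * s) - 1) * Q c 0 s := by
    field_simp
    ring
  rw [e3]
  have e5 : δ * Q c 0 s ≤ ((s - Λj) / (c * s) - 1) * Q c 0 s :=
    mul_le_mul_of_nonneg_right hbs hQ0pos.le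
  linarith

lemma tail_integral_eq {c a : ℝ} (hc : 0 < c) (ha : 0 < a) :
    ∫ x in Ioi (1:ℝ), x ^ (c - 1) * Real.exp (-(a * x ^ c)) = Real.exp (-a) / (c * a) := by
  have hderiv : ∀ x ∈ Ioi (1:ℝ),
      HasDerivAt (fun y : ℝ => -Real.exp (-(a * y ^ c)) / (c * a))
        (x ^ (c - 1) * Real.exp (-(a * x ^ c))) x := by
    intro x hx
    have hx0 : (0:ℝ) < x := lt_trans one_pos hx
    have hd := ((hasDerivAt_exp_rpow (c := c) (s := a) hx0).neg).div_const (c * a)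
    refine hd.congr_deriv (Eq.symm ?_)
    rw [Real.rpow_sub hx0, Real.rpow_one]
    field_simp
  have hint : IntegrableOn (fun x : ℝ => x ^ (c - 1) * Real.exp (-(a * x ^ c))) (Ioi 1) :=
    (integrable_base hc (by linarith) ha).mono_set (Ioi_subset_Ioi zero_le_one)
  have hcont : ContinuousWithinAt (fun y : ℝ => -Real.exp (-(a * y ^ c)) / (c * a)) (Ici 1) 1 := by
    apply ContinuousAt.continuousWithinAt
    have h1 : ContinuousAt (fun y : ℝ => y ^ c) 1 :=
      Real.continuousAt_rpow_const 1 c (Or.inl one_ne_zero)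
    exact (((Real.continuous_exp.continuousAt.comp ((h1.const_mul a).neg)).neg).div_const (c * a))
  have htend : Tendsto (fun y : ℝ => -Real.exp (-(a * y ^ c)) / (c * a)) atTop (nhds 0) := by
    have h := ((tendsto_exp_neg_rpow hc ha).neg).div_const (c * a)
    simpa using h
  have h := integral_Ioi_of_hasDerivAt_of_tendsto hcont hderiv hint htend
  rw [h]
  rw [Real.one_rpow]
  field_simp
  ring

lemma Kcc_le {c a : ℝ} (hc : 0 < c) (hc1 : c < 1) (ha : 0 < a) :
    K c c a ≤ 1 + Real.exp (-a) / (c * a) := by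
  have hsplit : K c c a
      = (∫ x in Ioc (0:ℝ) 1, x ^ c * Real.exp (-(a * x ^ c)) / (1 + x))
        + ∫ x in Ioi (1:ℝ), x ^ c * Real.exp (-(a * x ^ c)) / (1 + x) := by
    rw [K, ← setIntegral_union (Ioc_disjoint_Ioi le_rfl) measurableSet_Ioi
      ((integrable_K (q := c) hc (by linarith) ha).mono_set Ioc_subset_Ioi_self)
      ((integrable_K (q := c) hc (by linarith) ha).mono_set (Ioi_subset_Ioi zero_le_one))]
    rw [Ioc_union_Ioi_eq_Ioi zero_le_one]
  have hb1 : (∫ x in Ioc (0:ℝ) 1, x ^ c * Real.exp (-(a * x ^ c)) / (1 + x)) ≤ 1 := by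
    have hpt : ∀ x ∈ Ioc (0:ℝ) 1,
        x ^ c * Real.exp (-(a * x ^ c)) / (1 + x) ≤ (1:ℝ) := by
      intro x hx
      have hx0 : (0:ℝ) < x := hx.1
      have hxc : x ^ c ≤ 1 := Real.rpow_le_one hx0.le hx.2 hc.le
      have hE : Real.exp (-(a * x ^ c)) ≤ 1 := by
        have h2 : Real.exp (-(a * x ^ c)) ≤ Real.exp 0 := by
          apply Real.exp_le_exp.2
          have : 0 ≤ a * x ^ c := by positivity
          linarith
        rwa [Real.exp_zero] at h2
      rw [div_le_one (by linarith)]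
      have hxc0 : 0 ≤ x ^ c := (Real.rpow_pos_of_pos hx0 c).le
      nlinarith [Real.exp_nonneg (-(a * x ^ c))]
    have hmono := setIntegral_mono_on (μ := volume)
      ((integrable_K (q := c) hc (by linarith) ha).mono_set Ioc_subset_Ioi_self)
      (integrableOn_const measure_Ioc_lt_top.ne) measurableSet_Ioc hpt
    calc (∫ x in Ioc (0:ℝ) 1, x ^ c * Real.exp (-(a * x ^ c)) / (1 + x))
        ≤ ∫ _x in Ioc (0:ℝ) 1, (1:ℝ) := hmono
      _ = 1 := by simp
  have hb2 : (∫ x in Ioi (1:ℝ), x ^ c * Real.exp (-(a * x ^ c)) / (1 + x))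
      ≤ Real.exp (-a) / (c * a) := by
    rw [← tail_integral_eq hc ha]
    refine setIntegral_mono_on
      ((integrable_K (q := c) hc (by linarith) ha).mono_set (Ioi_subset_Ioi zero_le_one))
      ((integrable_base hc (by linarith) ha).mono_set (Ioi_subset_Ioi zero_le_one))
      measurableSet_Ioi (fun x hx => ?_)
    have hx1 : (1:ℝ) < x := hx
    have hx0 : (0:ℝ) < x := lt_trans one_pos hx1
    have h3 : x ^ c * Real.exp (-(a * x ^ c)) / (1 + x)
        ≤ x ^ c * Real.exp (-(a * x ^ c)) / x := by
      apply div_le_div_of_nonneg_left (by positivity) hx0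
      linarith
    calc x ^ c * Real.exp (-(a * x ^ c)) / (1 + x)
        ≤ x ^ c * Real.exp (-(a * x ^ c)) / x := h3
      _ = x ^ (c - 1) * Real.exp (-(a * x ^ c)) := by
          rw [Real.rpow_sub hx0, Real.rpow_one]
          ring
  linarith [hsplit, hb1, hb2]

lemma log_tail_lower {c a T : ℝ} (hc : 0 < c) (ha : 0 < a) (hT1 : 1 ≤ T)
    (haT : a * T ^ c ≤ 1) :
    Real.exp (-1) * (Real.log (1 + T) - Real.log 2) ≤ K c 0 a := by
  have hTpos : (0:ℝ) < T := lt_of_lt_of_le one_pos hT1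
  have hIoc : Ioc (1:ℝ) T ⊆ Ioi 0 := fun x hx => lt_trans one_pos hx.1
  -- the inner integral of 1/(1+x)
  have hlog : (∫ x in Ioc (1:ℝ) T, 1 / (1 + x)) = Real.log (1 + T) - Real.log 2 := by
    rw [← intervalIntegral.integral_of_le hT1]
    have hderiv : ∀ x ∈ uIcc (1:ℝ) T, HasDerivAt (fun y : ℝ => Real.log (1 + y))
        (1 / (1 + x)) x := by
      intro x hx
      rw [uIcc_of_le hT1] at hx
      have hx1 : (1:ℝ) ≤ x := hx.1
      have hne : (1:ℝ) + x ≠ 0 := by linarith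
      have hd := (((hasDerivAt_id x).const_add 1)).log hne
      simpa using hd
    have hintg : IntervalIntegrable (fun x : ℝ => 1 / (1 + x)) volume 1 T := by
      apply ContinuousOn.intervalIntegrable
      refine continuousOn_const.div ((continuous_const.add continuous_id').continuousOn) ?_
      intro y hy
      rw [uIcc_of_le hT1] at hy
      have h1 := hy.1
      intro h; linarith
    rw [intervalIntegral.integral_eq_sub_of_hasDerivAt hderiv hintg]
    norm_num
  -- pointwise bound on Ioc 1 T
  have hIc : IntegrableOn (fun x : ℝ => x ^ (0:ℝ) * Real.exp (-(a * x ^ c)) / (1 + x))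
      (Ioc 1 T) := (integrable_K hc (by norm_num) ha).mono_set hIoc
  have hIconst : IntegrableOn (fun x : ℝ => Real.exp (-1) * (1 / (1 + x))) (Ioc 1 T) := by
    apply (ContinuousOn.integrableOn_Icc ?_).mono_set Ioc_subset_Icc_self
    refine continuousOn_const.mul (continuousOn_const.div
      (continuousOn_const.add continuousOn_id) ?_)
    intro x hx
    have := hx.1
    intro h; linarith
  have hpt : ∀ x ∈ Ioc (1:ℝ) T, Real.exp (-1) * (1 / (1 + x))
      ≤ x ^ (0:ℝ) * Real.exp (-(a * x ^ c)) / (1 + x) := by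
    intro x hx
    have hx1 : (1:ℝ) < x := hx.1
    have hx0 : (0:ℝ) < x := lt_trans one_pos hx1
    have h1x : (0:ℝ) < 1 + x := by linarith
    have hxc : x ^ c ≤ T ^ c := Real.rpow_le_rpow hx0.le hx.2 hc.le
    have harg : a * x ^ c ≤ 1 := by
      calc a * x ^ c ≤ a * T ^ c := by gcongr
        _ ≤ 1 := haT
    have hexp : Real.exp (-1) ≤ Real.exp (-(a * x ^ c)) := by
      apply Real.exp_le_exp.2; linarith
    rw [Real.rpow_zero, one_mul]
    rw [mul_one_div, div_le_div_iff₀ h1x h1x]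
    nlinarith [Real.exp_nonneg (-1)]
  have hmono1 : (∫ x in Ioc (1:ℝ) T, Real.exp (-1) * (1 / (1 + x)))
      ≤ ∫ x in Ioc (1:ℝ) T, x ^ (0:ℝ) * Real.exp (-(a * x ^ c)) / (1 + x) :=
    setIntegral_mono_on hIconst hIc measurableSet_Ioc hpt
  have hmono2 : (∫ x in Ioc (1:ℝ) T, x ^ (0:ℝ) * Real.exp (-(a * x ^ c)) / (1 + x))
      ≤ K c 0 a := by
    rw [K]
    refine setIntegral_mono_set (integrable_K hc (by norm_num) ha)
      ?_ (HasSubset.Subset.eventuallyLE hIoc)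
    rw [EventuallyLE, ae_restrict_iff' measurableSet_Ioi]
    filter_upwards with x hx
    have hx0 : (0:ℝ) < x := hx
    positivity
  have hconstint : (∫ x in Ioc (1:ℝ) T, Real.exp (-1) * (1 / (1 + x)))
      = Real.exp (-1) * (Real.log (1 + T) - Real.log 2) := by
    rw [integral_const_mul, hlog]
  linarith

lemma exists_small {c Λj : ℝ} (hc : 0 < c) (hc1 : c < 1) (hΛj : 0 ≤ Λj) :
    ∃ a : ℝ, 0 < a ∧ a * K c c (a + Λj) < K c 0 (a + Λj) := by
  rcases eq_or_lt_of_le hΛj with hΛ0 | hΛpos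
  · -- case Λj = 0
    obtain rfl : Λj = 0 := hΛ0.symm
    have hcinv : (1:ℝ) < c⁻¹ := (one_lt_inv_iff₀).2 ⟨hc, hc1⟩
    set L : ℝ := 1 + c⁻¹ with hLdef
    have hL0 : 0 < L := by positivity
    set T : ℝ := 2 * Real.exp (3 * L) with hTdef
    have hT1 : (1:ℝ) ≤ T := by
      have h := Real.one_le_exp (by positivity : (0:ℝ) ≤ 3 * L)
      nlinarith
    have hT0 : (0:ℝ) < T := lt_of_lt_of_le one_pos hT1
    have hTc : (0:ℝ) < T ^ c := Real.rpow_pos_of_pos hT0 c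
    set a : ℝ := min 1 (T ^ (-c)) with hadef
    have haT0 : (0:ℝ) < T ^ (-c) := Real.rpow_pos_of_pos hT0 _
    have ha : 0 < a := lt_min one_pos haT0
    have ha1 : a ≤ 1 := min_le_left _ _
    have haT : a * T ^ c ≤ 1 := by
      have h1 : a ≤ T ^ (-c) := min_le_right _ _
      have h2 : T ^ (-c) = (T ^ c)⁻¹ := Real.rpow_neg hT0.le c
      calc a * T ^ c ≤ (T ^ c)⁻¹ * T ^ c := by
            rw [← h2]; exact mul_le_mul_of_nonneg_right h1 hTc.le
        _ = 1 := inv_mul_cancel₀ (ne_of_gt hTc)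
    simp only [add_zero]
    refine ⟨a, ha, ?_⟩
    -- upper bound
    have hup : a * K c c a ≤ L := by
      have h1 := Kcc_le hc hc1 ha
      have h2 : a * K c c a ≤ a * (1 + Real.exp (-a) / (c * a)) :=
        mul_le_mul_of_nonneg_left h1 ha.le
      have h3 : a * (1 + Real.exp (-a) / (c * a)) = a + Real.exp (-a) / c := by
        field_simp
      have h4 : Real.exp (-a) ≤ 1 := by
        have h5 : Real.exp (-a) ≤ Real.exp 0 := by
          apply Real.exp_le_exp.2; linarith
        rwa [Real.exp_zero] at h5
      have h6 : Real.exp (-a) / c ≤ c⁻¹ := by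
        rw [div_le_iff₀ hc]
        calc Real.exp (-a) ≤ 1 := h4
          _ = c⁻¹ * c := (inv_mul_cancel₀ (ne_of_gt hc)).symm
      rw [hLdef]
      linarith [h2, h3.le]
    -- lower bound
    have hlow : L < K c 0 a := by
      have h1 := log_tail_lower hc ha hT1 haT
      have hloggr : 3 * L ≤ Real.log (1 + T) - Real.log 2 := by
        have h2 : Real.log T ≤ Real.log (1 + T) :=
          Real.log_le_log hT0 (by linarith)
        have h3 : Real.log T = Real.log 2 + 3 * L := by
          rw [hTdef, Real.log_mul two_ne_zero (Real.exp_ne_zero _), Real.log_exp]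
        linarith
      have h4 : Real.exp (-1) * (3 * L) ≤ Real.exp (-1) * (Real.log (1 + T) - Real.log 2) :=
        mul_le_mul_of_nonneg_left hloggr (Real.exp_nonneg _)
      have h5 : L < Real.exp (-1) * (3 * L) := by
        have hE := Real.exp_one_lt_d9
        have hEpos := Real.exp_pos 1
        rw [Real.exp_neg]
        rw [inv_mul_eq_div, lt_div_iff₀ hEpos]
        nlinarith
      linarith
    linarith
  · -- case Λj > 0
    have hN1 : 0 < K c 0 (Λj + 1) := K_pos hc (by norm_num) (by linarith)
    have hD0 : 0 < K c c Λj := K_pos hc (by linarith) hΛpos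
    set a : ℝ := min 1 (K c 0 (Λj + 1) / (2 * K c c Λj)) with hadef
    have ha : 0 < a := lt_min one_pos (by positivity)
    have ha1 : a ≤ 1 := min_le_left _ _
    have ha2 : a ≤ K c 0 (Λj + 1) / (2 * K c c Λj) := min_le_right _ _
    refine ⟨a, ha, ?_⟩
    have hD : K c c (a + Λj) ≤ K c c Λj :=
      K_antitone hc (by linarith) hΛpos (by linarith)
    have hN : K c 0 (Λj + 1) ≤ K c 0 (a + Λj) :=
      K_antitone hc (by norm_num) (by linarith) (by linarith)
    have hchain : a * K c c (a + Λj) ≤ K c 0 (Λj + 1) / 2 := by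
      calc a * K c c (a + Λj) ≤ a * K c c Λj := mul_le_mul_of_nonneg_left hD ha.le
        _ ≤ K c 0 (Λj + 1) / (2 * K c c Λj) * K c c Λj :=
            mul_le_mul_of_nonneg_right ha2 hD0.le
        _ = K c 0 (Λj + 1) / 2 := by field_simp
    linarith

lemma K0_eq (c s : ℝ) : K c 0 s = ∫ x in Ioi (0:ℝ), Real.exp (-(s * x ^ c)) / (1 + x) := by
  rw [K]; simp only [Real.rpow_zero, one_mul]

lemma Q0_eq (c s : ℝ) : Q c 0 s = ∫ x in Ioi (0:ℝ), Real.exp (-(s * x ^ c)) / (1 + x) ^ 2 := by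
  rw [Q]; simp only [Real.rpow_zero, one_mul]

lemma integrable_W {c s : ℝ} (hc : 0 < c) (hs : 0 < s) :
    IntegrableOn (fun x : ℝ => Real.exp (-(s * x ^ c)) / (1 + x)) (Ioi 0) :=
  (integrable_K hc (by norm_num) hs (q := 0)).congr_fun
    (fun x _ => by simp only [Real.rpow_zero, one_mul]) measurableSet_Ioi

lemma integrable_U {c s : ℝ} (hc : 0 < c) (hs : 0 < s) :
    IntegrableOn (fun x : ℝ => Real.exp (-(s * x ^ c)) / (1 + x) ^ 2) (Ioi 0) :=
  (integrable_Q hc (by norm_num) hs (q := 0)).congr_fun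
    (fun x _ => by simp only [Real.rpow_zero, one_mul]) measurableSet_Ioi

/-- Cauchy–Schwarz-type inequality -/
lemma cs_ineq {c s : ℝ} (hc : 0 < c) (hc1 : c < 1) (hs : 0 < s) :
    K c c s ^ 2 ≤ K c 0 s * K c (c + c) s := by
  have hcm1 : (-1:ℝ) < c := by linarith
  set μ : Measure ℝ := volume.restrict (Ioi 0) with hμ
  set W : ℝ → ℝ := fun x => Real.exp (-(s * x ^ c)) / (1 + x) with hW
  set A : ℝ → ℝ := fun x => x ^ c * Real.exp (-(s * x ^ c)) / (1 + x) with hA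
  set B : ℝ → ℝ := fun x => x ^ (c + c) * Real.exp (-(s * x ^ c)) / (1 + x) with hB
  have hWint : Integrable W μ := integrable_W hc hs
  have hAint : Integrable A μ := integrable_K hc hcm1 hs
  have hBint : Integrable B μ := integrable_K hc (by linarith) hs
  set H : ℝ × ℝ → ℝ := fun p => B p.1 * W p.2 - 2 * (A p.1 * A p.2) + W p.1 * B p.2 with hH
  have hHint : Integrable H (μ.prod μ) :=
    ((hBint.mul_prod hWint).sub ((hAint.mul_prod hAint).const_mul 2)).add
      (hWint.mul_prod hBint)
  have hmem : ∀ᵐ p ∂(μ.prod μ), p ∈ (Ioi (0:ℝ)) ×ˢ (Ioi (0:ℝ)) := by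
    rw [hμ, Measure.prod_restrict]
    exact ae_restrict_mem (measurableSet_Ioi.prod measurableSet_Ioi)
  have hHnn : 0 ≤ᵐ[μ.prod μ] H := by
    filter_upwards [hmem] with p hp
    obtain ⟨hx, hy⟩ := hp
    have hx0 : (0:ℝ) < p.1 := hx
    have hy0 : (0:ℝ) < p.2 := hy
    have h1x : (0:ℝ) < 1 + p.1 := by linarith
    have h1y : (0:ℝ) < 1 + p.2 := by linarith
    have hEq : H p = (p.1 ^ c - p.2 ^ c) ^ 2 * (W p.1 * W p.2) := by
      rw [hH, hW, hA, hB]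
      simp only
      rw [Real.rpow_add hx0, Real.rpow_add hy0]
      field_simp
      ring
    rw [hEq]
    have hWx : 0 ≤ W p.1 := by rw [hW]; positivity
    have hWy : 0 ≤ W p.2 := by rw [hW]; positivity
    exact mul_nonneg (sq_nonneg _) (mul_nonneg hWx hWy)
  have hsplit : ∫ p, H p ∂(μ.prod μ)
      = K c (c + c) s * K c 0 s - 2 * (K c c s * K c c s) + K c 0 s * K c (c + c) s := by
    have i1 : Integrable (fun p : ℝ × ℝ => B p.1 * W p.2 - 2 * (A p.1 * A p.2)) (μ.prod μ) := by
      exact (hBint.mul_prod hWint).sub ((hAint.mul_prod hAint).const_mul 2)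
    rw [hH]
    rw [integral_add i1 (hWint.mul_prod hBint),
      integral_sub (by exact hBint.mul_prod hWint)
        (by exact (hAint.mul_prod hAint).const_mul 2),
      integral_const_mul, integral_prod_mul, integral_prod_mul, integral_prod_mul]
    have eW : (∫ a, W a ∂μ) = K c 0 s := (K0_eq c s).symm
    have eA : (∫ a, A a ∂μ) = K c c s := rfl
    have eB : (∫ a, B a ∂μ) = K c (c + c) s := rfl
    rw [eW, eA, eB]
  have hnn := integral_nonneg_of_ae hHnn
  rw [hsplit] at hnn
  nlinarith [hnn]

/-- strict Chebyshev inequality -/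
lemma cheb_ineq {c s : ℝ} (hc : 0 < c) (hc1 : c < 1) (hs : 0 < s) :
    Q c c s * K c 0 s < Q c 0 s * K c c s := by
  have hcm1 : (-1:ℝ) < c := by linarith
  set μ : Measure ℝ := volume.restrict (Ioi 0) with hμ
  set W : ℝ → ℝ := fun x => Real.exp (-(s * x ^ c)) / (1 + x) with hW
  set A : ℝ → ℝ := fun x => x ^ c * Real.exp (-(s * x ^ c)) / (1 + x) with hA
  set U : ℝ → ℝ := fun x => Real.exp (-(s * x ^ c)) / (1 + x) ^ 2 with hU
  set V : ℝ → ℝ := fun x => x ^ c * Real.exp (-(s * x ^ c)) / (1 + x) ^ 2 with hV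
  have hWint : Integrable W μ := integrable_W hc hs
  have hAint : Integrable A μ := integrable_K hc hcm1 hs
  have hUint : Integrable U μ := integrable_U hc hs
  have hVint : Integrable V μ := integrable_Q hc hcm1 hs
  set H : ℝ × ℝ → ℝ := fun p =>
    A p.1 * U p.2 - V p.1 * W p.2 - W p.1 * V p.2 + U p.1 * A p.2 with hH
  have hHint : Integrable H (μ.prod μ) :=
    (((hAint.mul_prod hUint).sub (hVint.mul_prod hWint)).sub
      (hWint.mul_prod hVint)).add (hUint.mul_prod hAint)
  have hkey : ∀ p : ℝ × ℝ, 0 < p.1 → 0 < p.2 →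
      H p = (p.1 ^ c - p.2 ^ c) * (p.1 - p.2) * (U p.1 * U p.2) := by
    intro p hx0 hy0
    have h1x : (0:ℝ) < 1 + p.1 := by linarith
    have h1y : (0:ℝ) < 1 + p.2 := by linarith
    rw [hH, hW, hA, hU, hV]
    simp only
    field_simp
    ring
  have hmem : ∀ᵐ p ∂(μ.prod μ), p ∈ (Ioi (0:ℝ)) ×ˢ (Ioi (0:ℝ)) := by
    rw [hμ, Measure.prod_restrict]
    exact ae_restrict_mem (measurableSet_Ioi.prod measurableSet_Ioi)
  have hHnn : 0 ≤ᵐ[μ.prod μ] H := by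
    filter_upwards [hmem] with p hp
    obtain ⟨hx, hy⟩ := hp
    have hx0 : (0:ℝ) < p.1 := hx
    have hy0 : (0:ℝ) < p.2 := hy
    rw [hkey p hx0 hy0]
    have hUx : 0 ≤ U p.1 := by rw [hU]; positivity
    have hUy : 0 ≤ U p.2 := by rw [hU]; positivity
    have h2 : 0 ≤ (p.1 ^ c - p.2 ^ c) * (p.1 - p.2) := by
      rcases le_total p.2 p.1 with hle | hle
      · have h1 : p.2 ^ c ≤ p.1 ^ c := Real.rpow_le_rpow hy0.le hle hc.le
        exact mul_nonneg (by linarith) (by linarith)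
      · have h1 : p.1 ^ c ≤ p.2 ^ c := Real.rpow_le_rpow hx0.le hle hc.le
        nlinarith [mul_nonneg (sub_nonneg.2 h1) (sub_nonneg.2 hle)]
    exact mul_nonneg h2 (mul_nonneg hUx hUy)
  have hsplit : ∫ p, H p ∂(μ.prod μ)
      = K c c s * Q c 0 s - Q c c s * K c 0 s - K c 0 s * Q c c s + Q c 0 s * K c c s := by
    have i1 : Integrable (fun p : ℝ × ℝ => A p.1 * U p.2 - V p.1 * W p.2) (μ.prod μ) := by
      exact (hAint.mul_prod hUint).sub (hVint.mul_prod hWint)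
    have i2 : Integrable (fun p : ℝ × ℝ => A p.1 * U p.2 - V p.1 * W p.2 - W p.1 * V p.2)
        (μ.prod μ) := by
      exact i1.sub (hWint.mul_prod hVint)
    rw [hH]
    rw [integral_add i2 (hUint.mul_prod hAint),
      integral_sub i1 (hWint.mul_prod hVint),
      integral_sub (by exact hAint.mul_prod hUint) (by exact hVint.mul_prod hWint),
      integral_prod_mul, integral_prod_mul, integral_prod_mul, integral_prod_mul]
    have eW : (∫ a, W a ∂μ) = K c 0 s := (K0_eq c s).symm
    have eA : (∫ a, A a ∂μ) = K c c s := rfl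
    have eU : (∫ a, U a ∂μ) = Q c 0 s := (Q0_eq c s).symm
    have eV : (∫ a, V a ∂μ) = Q c c s := rfl
    rw [eW, eA, eU, eV]
  -- strict positivity via a box away from the diagonal
  set box : Set (ℝ × ℝ) := (Ioo (2:ℝ) 3) ×ˢ (Ioo (0:ℝ) 1) with hbox
  have hboxmeas : MeasurableSet box := measurableSet_Ioo.prod measurableSet_Ioo
  have hsub23 : Ioo (2:ℝ) 3 ⊆ Ioi 0 := fun x hx => lt_trans two_pos hx.1
  have hsub01 : Ioo (0:ℝ) 1 ⊆ Ioi 0 := fun x hx => hx.1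
  have hμ23 : μ (Ioo (2:ℝ) 3) = 1 := by
    rw [hμ, Measure.restrict_apply measurableSet_Ioo, inter_eq_left.mpr hsub23,
      Real.volume_Ioo]
    norm_num
  have hμ01 : μ (Ioo (0:ℝ) 1) = 1 := by
    rw [hμ, Measure.restrict_apply measurableSet_Ioo, inter_eq_left.mpr hsub01,
      Real.volume_Ioo]
    norm_num
  have hboxvol : (μ.prod μ) box = 1 := by
    rw [hbox, Measure.prod_prod, hμ23, hμ01, mul_one]
  have h2c : (1:ℝ) < 2 ^ (c:ℝ) := by
    have h := Real.rpow_lt_rpow (zero_le_one) (one_lt_two) hc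
    rwa [Real.one_rpow] at h
  set κ : ℝ := (2 ^ (c:ℝ) - 1) * (Real.exp (-(s * 3 ^ (c:ℝ))) / 16 * (Real.exp (-s) / 4))
    with hκ
  have hκpos : 0 < κ := by
    rw [hκ]
    have : (0:ℝ) < 2 ^ (c:ℝ) - 1 := by linarith
    positivity
  have hlow : ∀ p ∈ box, κ ≤ H p := by
    intro p hp
    obtain ⟨hp1, hp2⟩ := hp
    have hx2 : (2:ℝ) < p.1 := hp1.1
    have hx3 : p.1 < 3 := hp1.2
    have hy0 : (0:ℝ) < p.2 := hp2.1
    have hy1 : p.2 < 1 := hp2.2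
    have hx0 : (0:ℝ) < p.1 := by linarith
    rw [hkey p hx0 hy0]
    have hgap : 2 ^ (c:ℝ) - 1 ≤ p.1 ^ c - p.2 ^ c := by
      have e1 : (2:ℝ) ^ (c:ℝ) ≤ p.1 ^ c := Real.rpow_le_rpow (by norm_num) hx2.le hc.le
      have e2 : p.2 ^ c ≤ 1 := Real.rpow_le_one hy0.le hy1.le hc.le
      linarith
    have hgapnn : (0:ℝ) ≤ 2 ^ (c:ℝ) - 1 := by linarith
    have hxy1 : (1:ℝ) ≤ p.1 - p.2 := by linarith
    have hU1 : Real.exp (-(s * 3 ^ (c:ℝ))) / 16 ≤ U p.1 := by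
      rw [hU]
      have e1 : p.1 ^ c ≤ 3 ^ (c:ℝ) := Real.rpow_le_rpow hx0.le hx3.le hc.le
      have e2 : Real.exp (-(s * 3 ^ (c:ℝ))) ≤ Real.exp (-(s * p.1 ^ c)) := by
        apply Real.exp_le_exp.2
        have : s * p.1 ^ c ≤ s * 3 ^ (c:ℝ) := by gcongr
        linarith
      have e3 : (1 + p.1) ^ 2 ≤ 16 := by nlinarith
      exact div_le_div₀ (Real.exp_nonneg _) e2 (by positivity) e3
    have hU2 : Real.exp (-s) / 4 ≤ U p.2 := by
      rw [hU]
      have e1 : p.2 ^ c ≤ 1 := Real.rpow_le_one hy0.le hy1.le hc.le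
      have e2 : Real.exp (-s) ≤ Real.exp (-(s * p.2 ^ c)) := by
        apply Real.exp_le_exp.2
        have : s * p.2 ^ c ≤ s * 1 := by gcongr
        linarith
      have e3 : (1 + p.2) ^ 2 ≤ 4 := by nlinarith
      exact div_le_div₀ (Real.exp_nonneg _) e2 (by positivity) e3
    have hUnn : 0 ≤ U p.1 * U p.2 :=
      mul_nonneg (le_trans (by positivity) hU1) (le_trans (by positivity) hU2)
    have t1 : Real.exp (-(s * 3 ^ (c:ℝ))) / 16 * (Real.exp (-s) / 4) ≤ U p.1 * U p.2 :=
      mul_le_mul hU1 hU2 (by positivity) (le_trans (by positivity) hU1)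
    have t3 : κ ≤ (p.1 ^ c - p.2 ^ c) * (U p.1 * U p.2) := by
      rw [hκ]
      exact mul_le_mul hgap t1 (by positivity) (by linarith)
    have t5 : (p.1 ^ c - p.2 ^ c) * (U p.1 * U p.2) * 1
        ≤ (p.1 ^ c - p.2 ^ c) * (U p.1 * U p.2) * (p.1 - p.2) :=
      mul_le_mul_of_nonneg_left hxy1 (mul_nonneg (by linarith) hUnn)
    calc κ ≤ (p.1 ^ c - p.2 ^ c) * (U p.1 * U p.2) := t3
      _ = (p.1 ^ c - p.2 ^ c) * (U p.1 * U p.2) * 1 := (mul_one _).symm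
      _ ≤ (p.1 ^ c - p.2 ^ c) * (U p.1 * U p.2) * (p.1 - p.2) := t5
      _ = (p.1 ^ c - p.2 ^ c) * (p.1 - p.2) * (U p.1 * U p.2) := by ring
  have hboxle := setIntegral_ge_of_const_le (μ := μ.prod μ) hboxmeas
    (by rw [hboxvol]; exact ENNReal.one_ne_top) hlow hHint.integrableOn
  rw [measureReal_def, hboxvol, ENNReal.toReal_one, one_smul] at hboxle
  have hup := setIntegral_le_integral (s := box) hHint hHnn
  have hfin : 0 < ∫ p, H p ∂(μ.prod μ) := lt_of_lt_of_le hκpos (le_trans hboxle hup)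
  rw [hsplit] at hfin
  nlinarith [hfin]
lemma contDiffOn_main {c Λj : ℝ} (hc : 0 < c) (hΛj : 0 ≤ Λj) :
    ContDiffOn ℝ (⊤ : ℕ∞) (fun Λi : ℝ => Λi * K c 0 (Λi + Λj)) (Ioi 0) := by
  have hUopen : IsOpen {z : ℂ | 0 < z.re} := isOpen_lt continuous_const Complex.continuous_re
  have hGanal : AnalyticOnNhd ℂ (G c) {z : ℂ | 0 < z.re} :=
    (diffOn_G hc).analyticOnNhd hUopen
  set U : Set ℂ := {z : ℂ | 0 < z.re + Λj} with hUdef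
  have hU2open : IsOpen U := by
    have : U = (fun z : ℂ => z.re + Λj) ⁻¹' (Ioi 0) := by
      ext z; simp [hUdef]
    rw [this]
    exact (Complex.continuous_re.add continuous_const).isOpen_preimage _ isOpen_Ioi
  have hmap1 : MapsTo (fun z : ℂ => z + (Λj : ℂ)) U {z : ℂ | 0 < z.re} := by
    intro z hz
    have : 0 < z.re + Λj := hz
    simp only [mem_setOf_eq, Complex.add_re, Complex.ofReal_re]
    exact this
  have hHanal : AnalyticOnNhd ℂ (fun z : ℂ => z * G c (z + (Λj : ℂ))) U :=
    analyticOnNhd_id.mul ((hGanal.comp (analyticOnNhd_id.add analyticOnNhd_const)) hmap1)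
  have hreal : AnalyticOnNhd ℝ (fun z : ℂ => z * G c (z + (Λj : ℂ))) U :=
    hHanal.restrictScalars
  have hmap2 : MapsTo (fun t : ℝ => (t : ℂ)) (Ioi (0:ℝ)) U := by
    intro t ht
    have ht0 : (0:ℝ) < t := ht
    simp only [hUdef, mem_setOf_eq, Complex.ofReal_re]
    linarith
  have hcomp1 : AnalyticOnNhd ℝ (fun t : ℝ => (t : ℂ) * G c ((t : ℂ) + (Λj : ℂ))) (Ioi 0) :=
    hreal.comp (Complex.ofRealCLM.analyticOnNhd _) hmap2
  have hcomp2 : AnalyticOnNhd ℝ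
      (fun t : ℝ => ((t : ℂ) * G c ((t : ℂ) + (Λj : ℂ))).re) (Ioi 0) :=
    (Complex.reCLM.analyticOnNhd univ).comp hcomp1 (mapsTo_univ _ _)
  have heq : EqOn (fun t : ℝ => ((t : ℂ) * G c ((t : ℂ) + (Λj : ℂ))).re)
      (fun Λi : ℝ => Λi * K c 0 (Λi + Λj)) (Ioi 0) := by
    intro t _
    simp only
    have h1 : ((t : ℂ) + (Λj : ℂ)) = ((t + Λj : ℝ) : ℂ) := by push_cast; ring
    rw [h1, G_real, ← Complex.ofReal_mul, Complex.ofReal_re]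
  exact ((hcomp2.congr isOpen_Ioi heq).contDiffOn (uniqueDiffOn_Ioi 0))

end VRmax

open VRmax Set

theorem variable_rate_unique_max (α Λj : ℝ) (hα : 2 < α) (hΛj : 0 ≤ Λj) :
    ContDiffOn ℝ (⊤ : ℕ∞)
      (fun Λi : ℝ => Λi * ∫ x in Set.Ioi (0 : ℝ),
        Real.exp (-((Λi + Λj) * x ^ (2 / α))) / (1 + x)) (Set.Ioi 0) ∧
    (∃! m : ℝ, 0 < m ∧
      IsMaxOn (fun Λi : ℝ => Λi * ∫ x in Set.Ioi (0 : ℝ),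
        Real.exp (-((Λi + Λj) * x ^ (2 / α))) / (1 + x)) (Set.Ioi 0) m) ∧
    (∀ m : ℝ, 0 < m →
      (IsMaxOn (fun Λi : ℝ => Λi * ∫ x in Set.Ioi (0 : ℝ),
          Real.exp (-((Λi + Λj) * x ^ (2 / α))) / (1 + x)) (Set.Ioi 0) m ↔
        (∫ x in Set.Ioi (0 : ℝ), Real.exp (-((m + Λj) * x ^ (2 / α))) / (1 + x)) /
          (m * ∫ x in Set.Ioi (0 : ℝ),
            x ^ (2 / α) * Real.exp (-((m + Λj) * x ^ (2 / α))) / (1 + x)) = 1)) := by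
  have hα0 : (0:ℝ) < α := by linarith
  set c : ℝ := 2 / α with hcdef
  have hc : 0 < c := by positivity
  have hc1 : c < 1 := by
    rw [hcdef, div_lt_one hα0]
    linarith
  -- identify the objective with `g`
  have hfun : (fun Λi : ℝ => Λi * ∫ x in Ioi (0 : ℝ),
      Real.exp (-((Λi + Λj) * x ^ c)) / (1 + x))
      = fun Λi : ℝ => Λi * K c 0 (Λi + Λj) := by
    funext t
    rw [K0_eq]
  rw [hfun]
  set g : ℝ → ℝ := fun Λi : ℝ => Λi * K c 0 (Λi + Λj) with hgdef
  set r : ℝ → ℝ := fun m : ℝ => K c 0 (m + Λj) / (m * K c c (m + Λj)) with hrdef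
  -- derivatives
  have hNder : ∀ m : ℝ, 0 < m →
      HasDerivAt (fun t : ℝ => K c 0 (t + Λj)) (-K c c (m + Λj)) m := by
    intro m hm
    have hs : 0 < m + Λj := by linarith
    have h0 := hasDerivAt_K (q := 0) hc (by norm_num) hs
    have h2 : HasDerivAt (fun t : ℝ => t + Λj) 1 m := (hasDerivAt_id m).add_const Λj
    have h3 := h0.comp m h2
    simp only [zero_add] at h3
    simp only [mul_one] at h3
    exact h3
  have hDder : ∀ m : ℝ, 0 < m →
      HasDerivAt (fun t : ℝ => K c c (t + Λj)) (-K c (c + c) (m + Λj)) m := by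
    intro m hm
    have hs : 0 < m + Λj := by linarith
    have h0 := hasDerivAt_K (q := c) hc (by linarith) hs
    have h2 : HasDerivAt (fun t : ℝ => t + Λj) 1 m := (hasDerivAt_id m).add_const Λj
    have h3 := h0.comp m h2
    simp only [mul_one] at h3
    exact h3
  have hgder : ∀ m : ℝ, 0 < m →
      HasDerivAt g (K c 0 (m + Λj) - m * K c c (m + Λj)) m := by
    intro m hm
    have h1 := (hasDerivAt_id m).mul (hNder m hm)
    simp only [id_eq, one_mul] at h1
    refine h1.congr_deriv (Eq.symm ?_)
    ring
  have hdenpos : ∀ m : ℝ, 0 < m → 0 < m * K c c (m + Λj) := by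
    intro m hm
    have hs : 0 < m + Λj := by linarith
    exact mul_pos hm (K_pos hc (by linarith) hs)
  have hden2 : ∀ m : ℝ, 0 < m →
      HasDerivAt (fun t : ℝ => t * K c c (t + Λj))
        (1 * K c c (m + Λj) + m * -K c (c + c) (m + Λj)) m := by
    intro m hm
    have h2 := (hasDerivAt_id m).mul (hDder m hm)
    exact h2
  have hrder : ∀ m : ℝ, 0 < m → HasDerivAt r
      ((-K c c (m + Λj) * (m * K c c (m + Λj)) - K c 0 (m + Λj) *
        (1 * K c c (m + Λj) + m * -K c (c + c) (m + Λj))) / (m * K c c (m + Λj)) ^ 2) m := by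
    intro m hm
    exact (hNder m hm).div (hden2 m hm) (ne_of_gt (hdenpos m hm))
  -- negativity of the numerator of r'
  have hnum : ∀ m : ℝ, 0 < m →
      -K c c (m + Λj) * (m * K c c (m + Λj)) - K c 0 (m + Λj) *
        (1 * K c c (m + Λj) + m * -K c (c + c) (m + Λj)) < 0 := by
    intro m hm
    have hs : 0 < m + Λj := by linarith
    have hN := K_pos hc (by norm_num) hs (q := 0)
    have hD := K_pos hc (by linarith) hs (q := c)
    have hE := K_pos hc (by linarith) hs (q := c + c)
    have hcs := cs_ineq hc hc1 hs
    have hchb := cheb_ineq hc hc1 hs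
    have hi1 := ibp1 hc hc1 hs
    have hi2 := ibp2 hc hc1 hs
    have f1 : 0 ≤ Λj * (K c 0 (m + Λj) * K c (c + c) (m + Λj) - K c c (m + Λj) ^ 2) := by
      apply mul_nonneg hΛj
      nlinarith [hcs]
    have f2 : (m + Λj) * (K c 0 (m + Λj) * K c (c + c) (m + Λj))
        = K c 0 (m + Λj) * K c c (m + Λj) + c⁻¹ * (K c 0 (m + Λj) * Q c c (m + Λj)) := by
      linear_combination K c 0 (m + Λj) * hi2
    have f3 : (m + Λj) * K c c (m + Λj) ^ 2 = c⁻¹ * (Q c 0 (m + Λj) * K c c (m + Λj)) := by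
      linear_combination K c c (m + Λj) * hi1
    have f4 : c⁻¹ * (Q c c (m + Λj) * K c 0 (m + Λj))
        < c⁻¹ * (Q c 0 (m + Λj) * K c c (m + Λj)) :=
      mul_lt_mul_of_pos_left hchb (inv_pos.2 hc)
    nlinarith [f1, f2, f3, f4]
  have hrcont : ∀ m : ℝ, 0 < m → ContinuousAt r m := fun m hm => (hrder m hm).continuousAt
  have hranti : StrictAntiOn r (Ioi 0) := by
    apply strictAntiOn_of_deriv_neg (convex_Ioi 0)
    · exact fun m hm => (hrcont m hm).continuousWithinAt
    · intro m hm
      rw [interior_Ioi] at hm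
      rw [(hrder m hm).deriv]
      apply div_neg_of_neg_of_pos (hnum m hm)
      have := hdenpos m hm
      positivity
  -- r > 1 iff N > m D
  have hrgt : ∀ m : ℝ, 0 < m → (1 < r m ↔ m * K c c (m + Λj) < K c 0 (m + Λj)) := by
    intro m hm
    rw [hrdef]
    exact one_lt_div (hdenpos m hm)
  have hrlt : ∀ m : ℝ, 0 < m → (r m < 1 ↔ K c 0 (m + Λj) < m * K c c (m + Λj)) := by
    intro m hm
    rw [hrdef]
    exact div_lt_one (hdenpos m hm)
  -- endpoints
  obtain ⟨a, ha0, ha⟩ := exists_small hc hc1 hΛj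
  obtain ⟨b, hb0, hb⟩ := exists_big hc hc1 hΛj
  have hra : 1 < r a := (hrgt a ha0).2 ha
  have hrb : r b < 1 := (hrlt b hb0).2 hb
  have hab : a < b := by
    rcases lt_trichotomy a b with h | h | h
    · exact h
    · exfalso; rw [h] at hra; linarith
    · exfalso
      have := hranti (mem_Ioi.2 hb0) (mem_Ioi.2 ha0) h
      linarith
  -- IVT
  have hrconton : ContinuousOn r (Icc a b) := fun m hm =>
    ((hrcont m (lt_of_lt_of_le ha0 hm.1)).continuousWithinAt)
  have hIVT := intermediate_value_Icc' hab.le hrconton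
  have h1mem : (1:ℝ) ∈ Icc (r b) (r a) := ⟨hrb.le, hra.le⟩
  obtain ⟨m₀, hm₀mem, hrm₀⟩ := hIVT h1mem
  have hm₀pos : 0 < m₀ := lt_of_lt_of_le ha0 hm₀mem.1
  -- sign of g'
  have hgpos : ∀ m : ℝ, 0 < m → m < m₀ → 0 < K c 0 (m + Λj) - m * K c c (m + Λj) := by
    intro m hm hmlt
    have h1 : r m₀ < r m := hranti (mem_Ioi.2 hm) (mem_Ioi.2 hm₀pos) hmlt
    rw [hrm₀] at h1
    have := (hrgt m hm).1 h1
    linarith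
  have hgneg : ∀ m : ℝ, m₀ < m → K c 0 (m + Λj) - m * K c c (m + Λj) < 0 := by
    intro m hmgt
    have hm : 0 < m := lt_trans hm₀pos hmgt
    have h1 : r m < r m₀ := hranti (mem_Ioi.2 hm₀pos) (mem_Ioi.2 hm) hmgt
    rw [hrm₀] at h1
    have := (hrlt m hm).1 h1
    linarith
  have hgcont : ∀ m : ℝ, 0 < m → ContinuousAt g m := fun m hm => (hgder m hm).continuousAt
  have hmono : StrictMonoOn g (Ioc 0 m₀) := by
    apply strictMonoOn_of_deriv_pos (convex_Ioc 0 m₀)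
    · exact fun m hm => (hgcont m hm.1).continuousWithinAt
    · intro m hm
      rw [interior_Ioc] at hm
      rw [(hgder m hm.1).deriv]
      exact hgpos m hm.1 hm.2
  have hanti : StrictAntiOn g (Ici m₀) := by
    apply strictAntiOn_of_deriv_neg (convex_Ici m₀)
    · exact fun m hm => (hgcont m (lt_of_lt_of_le hm₀pos hm)).continuousWithinAt
    · intro m hm
      rw [interior_Ici] at hm
      rw [(hgder m (lt_trans hm₀pos hm)).deriv]
      exact hgneg m hm
  have hmax : IsMaxOn g (Ioi 0) m₀ := by
    rw [isMaxOn_iff]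
    intro y hy
    have hy0 : (0:ℝ) < y := hy
    rcases lt_trichotomy y m₀ with h | h | h
    · exact (hmono ⟨hy0, h.le⟩ ⟨hm₀pos, le_refl m₀⟩ h).le
    · rw [h]
    · exact (hanti (self_mem_Ici) (mem_Ici.2 h.le) h).le
  -- any positive maximizer equals m₀
  have huniq : ∀ m : ℝ, 0 < m → IsMaxOn g (Ioi 0) m → m = m₀ := by
    intro m hm hmmax
    have hloc : IsLocalMax g m := hmmax.isLocalMax (isOpen_Ioi.mem_nhds hm)
    have hz := hloc.hasDerivAt_eq_zero (hgder m hm)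
    have hr1 : r m = 1 := by
      rw [hrdef]
      simp only
      have hNm : K c 0 (m + Λj) = m * K c c (m + Λj) := by linarith
      rw [hNm]
      exact div_self (ne_of_gt (hdenpos m hm))
    exact hranti.injOn (mem_Ioi.2 hm) (mem_Ioi.2 hm₀pos) (by rw [hr1, hrm₀])
  refine ⟨contDiffOn_main hc hΛj, ⟨m₀, ⟨hm₀pos, hmax⟩, ?_⟩, ?_⟩
  · rintro m' ⟨hm'pos, hm'max⟩
    exact huniq m' hm'pos hm'max
  · intro m hm
    rw [show (∫ x in Ioi (0:ℝ), Real.exp (-((m + Λj) * x ^ c)) / (1 + x))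
        = K c 0 (m + Λj) from (K0_eq c (m + Λj)).symm]
    constructor
    · intro hmmax
      have hmm₀ := huniq m hm hmmax
      have hNm : K c 0 (m + Λj) = m * K c c (m + Λj) := by
        have hloc : IsLocalMax g m := hmmax.isLocalMax (isOpen_Ioi.mem_nhds hm)
        have hz := hloc.hasDerivAt_eq_zero (hgder m hm)
        linarith
      rw [hNm]
      exact div_self (ne_of_gt (hdenpos m hm))
    · intro hratio
      have hr1 : r m = 1 := hratio
      have hmm₀ : m = m₀ :=
        hranti.injOn (mem_Ioi.2 hm) (mem_Ioi.2 hm₀pos) (by rw [hr1, hrm₀])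
      rw [hmm₀]
      exact hmax
end

section
/- For α > 2, s^{α/2}·max_{β>0} log(1+β)e^{−sβ^{2/α}} → (α/2)^{α/2} e^{−α/2} as s → ∞, where the relevant choice of β is the one with β^{2/α} = α/(2s). -/
open Real Filter

theorem fixed_rate_asymptotics (α : ℝ) (hα : 2 < α) :
    Tendsto (fun s : ℝ =>
        s ^ (α / 2) * ⨆ β : Set.Ioi (0 : ℝ),
          Real.log (1 + (β : ℝ)) * Real.exp (-(s * (β : ℝ) ^ (2 / α))))
      atTop (nhds ((α / 2) ^ (α / 2) * Real.exp (-(α / 2)))) := by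
  have hα0 : (0:ℝ) < α := by linarith
  set c := α / 2 with hc
  have hc0 : (0:ℝ) < c := by rw [hc]; linarith
  have hexp : (2 / α) * c = 1 := by rw [hc]; field_simp
  haveI : Nonempty (Set.Ioi (0:ℝ)) := ⟨⟨1, by norm_num⟩⟩
  -- key pointwise upper bound
  have key : ∀ s : ℝ, 0 < s → ∀ β : ℝ, 0 < β →
      Real.log (1 + β) * Real.exp (-(s * β ^ (2 / α))) ≤ (c / s) ^ c * Real.exp (-c) := by
    intro s hs β hβ
    have hcs : 0 < c / s := by positivity
    set t := β ^ (2/α) with ht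
    have ht0 : 0 < t := Real.rpow_pos_of_pos hβ _
    have hβt : β = t ^ c := by
      rw [ht, ← Real.rpow_mul hβ.le, hexp, Real.rpow_one]
    have hlog : Real.log (1 + β) ≤ β := by
      have := Real.log_le_sub_one_of_pos (show (0:ℝ) < 1 + β by linarith)
      linarith
    have h1 : Real.log t - Real.log (c / s) ≤ t * s / c - 1 := by
      have h := Real.log_le_sub_one_of_pos (show (0:ℝ) < t / (c / s) by positivity)
      rw [Real.log_div ht0.ne' hcs.ne'] at h
      have : t / (c / s) = t * s / c := by field_simp
      linarith [this ▸ h]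
    have h2 : c * Real.log t - s * t ≤ c * Real.log (c / s) - c := by
      have := mul_le_mul_of_nonneg_left h1 hc0.le
      have hcts : c * (t * s / c) = s * t := by field_simp
      nlinarith
    calc Real.log (1 + β) * Real.exp (-(s * t))
        ≤ β * Real.exp (-(s * t)) := by
          exact mul_le_mul_of_nonneg_right hlog (Real.exp_pos _).le
      _ = Real.exp (c * Real.log t - s * t) := by
          rw [hβt, Real.rpow_def_of_pos ht0, ← Real.exp_add]
          ring_nf
      _ ≤ Real.exp (c * Real.log (c / s) - c) := Real.exp_le_exp.mpr h2
      _ = (c / s) ^ c * Real.exp (-c) := by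
          rw [Real.rpow_def_of_pos hcs, ← Real.exp_add]
          ring_nf
  -- upper bound on the sup
  have bdd : ∀ s : ℝ, 0 < s → BddAbove (Set.range fun β : Set.Ioi (0:ℝ) =>
      Real.log (1 + (β : ℝ)) * Real.exp (-(s * (β : ℝ) ^ (2 / α)))) := by
    intro s hs
    exact ⟨(c / s) ^ c * Real.exp (-c), by
      rintro x ⟨⟨β, hβ⟩, rfl⟩; exact key s hs β hβ⟩
  have upper : ∀ᶠ s : ℝ in atTop,
      s ^ c * (⨆ β : Set.Ioi (0:ℝ),
        Real.log (1 + (β : ℝ)) * Real.exp (-(s * (β : ℝ) ^ (2 / α)))) ≤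
      c ^ c * Real.exp (-c) := by
    filter_upwards [eventually_gt_atTop (0:ℝ)] with s hs
    have hsup : (⨆ β : Set.Ioi (0:ℝ),
        Real.log (1 + (β : ℝ)) * Real.exp (-(s * (β : ℝ) ^ (2 / α)))) ≤
        (c / s) ^ c * Real.exp (-c) :=
      ciSup_le fun ⟨β, hβ⟩ => key s hs β hβ
    have hmul : s ^ c * ((c / s) ^ c * Real.exp (-c)) = c ^ c * Real.exp (-c) := by
      rw [← mul_assoc, ← Real.mul_rpow hs.le (by positivity : (0:ℝ) ≤ c / s),
        mul_div_cancel₀ _ hs.ne']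
    calc s ^ c * _ ≤ s ^ c * ((c / s) ^ c * Real.exp (-c)) :=
          mul_le_mul_of_nonneg_left hsup (Real.rpow_nonneg hs.le _)
      _ = c ^ c * Real.exp (-c) := hmul
  -- lower bound
  have lower : ∀ᶠ s : ℝ in atTop,
      Real.log (1 + (c / s) ^ c) * Real.exp (-c) * s ^ c ≤
      s ^ c * (⨆ β : Set.Ioi (0:ℝ),
        Real.log (1 + (β : ℝ)) * Real.exp (-(s * (β : ℝ) ^ (2 / α)))) := by
    filter_upwards [eventually_gt_atTop (0:ℝ)] with s hs
    have hcs : 0 < c / s := by positivity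
    have hβs : (0:ℝ) < (c / s) ^ c := Real.rpow_pos_of_pos hcs _
    have hval : Real.log (1 + (c / s) ^ c) * Real.exp (-(s * ((c / s) ^ c) ^ (2 / α))) =
        Real.log (1 + (c / s) ^ c) * Real.exp (-c) := by
      rw [← Real.rpow_mul hcs.le]
      have : c * (2 / α) = 1 := by linarith [hexp, mul_comm (2/α) c]
      rw [this, Real.rpow_one, mul_div_cancel₀ _ hs.ne']
    have hle := le_ciSup (bdd s hs) (⟨(c / s) ^ c, hβs⟩ : Set.Ioi (0:ℝ))
    rw [mul_comm _ (s ^ c)]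
    exact mul_le_mul_of_nonneg_left (by rw [← hval]; exact hle) (Real.rpow_nonneg hs.le _)
  -- limit of the lower bound
  have hslope : Tendsto (fun x : ℝ => Real.log (1 + x) / x) (nhdsWithin 0 {0}ᶜ) (nhds 1) := by
    have hd : HasDerivAt (fun x : ℝ => Real.log (1 + x)) 1 0 := by
      have h := (Real.hasDerivAt_log (by norm_num : (1:ℝ) + 0 ≠ 0)).comp 0
        ((hasDerivAt_id (0:ℝ)).const_add 1)
      simpa [Function.comp_def] using h
    have := hasDerivAt_iff_tendsto_slope.mp hd
    refine this.congr fun x => ?_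
    simp [slope_fun_def, div_eq_inv_mul]
  have hu : Tendsto (fun s : ℝ => (c / s) ^ c) atTop (nhdsWithin 0 (Set.Ioi 0)) := by
    rw [tendsto_nhdsWithin_iff]
    constructor
    · have h1 : Tendsto (fun s : ℝ => c / s) atTop (nhds 0) :=
        tendsto_const_nhds.div_atTop tendsto_id
      have := h1.rpow_const (Or.inr hc0.le)
      simpa [Real.zero_rpow hc0.ne'] using this
    · filter_upwards [eventually_gt_atTop (0:ℝ)] with s hs
      exact Real.rpow_pos_of_pos (by positivity) _
  have hratio : Tendsto (fun s : ℝ => Real.log (1 + (c / s) ^ c) / (c / s) ^ c)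
      atTop (nhds 1) :=
    hslope.comp (hu.mono_right (nhdsWithin_mono _ (fun x hx => ne_of_gt hx)))
  have hlowlim : Tendsto (fun s : ℝ => Real.log (1 + (c / s) ^ c) * Real.exp (-c) * s ^ c)
      atTop (nhds (c ^ c * Real.exp (-c))) := by
    have heq : ∀ᶠ s : ℝ in atTop,
        c ^ c * Real.exp (-c) * (Real.log (1 + (c / s) ^ c) / (c / s) ^ c) =
        Real.log (1 + (c / s) ^ c) * Real.exp (-c) * s ^ c := by
      filter_upwards [eventually_gt_atTop (0:ℝ)] with s hs
      have hcs : 0 < c / s := by positivity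
      have hβs : (0:ℝ) < (c / s) ^ c := Real.rpow_pos_of_pos hcs _
      have hkey : s ^ c * (c / s) ^ c = c ^ c := by
        rw [← Real.mul_rpow hs.le hcs.le, mul_div_cancel₀ _ hs.ne']
      rw [← hkey]
      field_simp
    have := (hratio.const_mul (c ^ c * Real.exp (-c))).congr' heq
    simpa using this
  exact tendsto_of_tendsto_of_tendsto_of_le_of_le' hlowlim tendsto_const_nhds lower upper
end
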